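/- arXiv:1908.08611 — 7 statements merged into one kernel-verified Lean document; each statement's English description precedes it below -/
import Mathlib

section
/- For every integer g ≥ 1 and every integer k with 2 ≤ k ≤ 3g−3, the strict bounds 1 − 2/(6g−1) < a(g,k) < 1 hold. Moreover a(g,0) = a(g,3g−1) = 1 and a(g,1) = a(g,3g−2) = 1 − 2/(6g−1). -/
set_option maxHeartbeats 1000000

/-- The increment `d(g,k)` in Zograf's recursion for the normalized 2-point
intersection numbers of ψ-classes. -/
noncomputable def dZ (g k : ℕ) : ℚ :=
  if k % 3 = 2 then
    -- `k = 3j - 1`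
    let j := (k + 1) / 3
    ((Nat.doubleFactorial (6 * j - 1) : ℚ) / (Nat.factorial j : ℚ)) *
      ((Nat.factorial (g - 1) : ℚ) / (Nat.factorial (g - j) : ℚ)) * ((g : ℚ) - 2 * (j : ℚ))
  else if k % 3 = 0 then
    -- `k = 3j`
    let j := k / 3
    (-2) * ((Nat.doubleFactorial (6 * j + 1) : ℚ) / (Nat.factorial j : ℚ)) *
      ((Nat.factorial (g - 1) : ℚ) / (Nat.factorial (g - 1 - j) : ℚ))
  else
    -- `k = 3j + 1`
    let j := (k - 1) / 3
    2 * ((Nat.doubleFactorial (6 * j + 3) : ℚ) / (Nat.factorial j : ℚ)) *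
      ((Nat.factorial (g - 1) : ℚ) / (Nat.factorial (g - 1 - j) : ℚ))

/-- The recursively defined values: `aRec g 0 = 1` and
`aRec g (k+1) = aRec g k + ((6g−3−2k)‼/(6g−1)‼)·d(g,k)`. -/
noncomputable def aRec (g : ℕ) : ℕ → ℚ
  | 0 => 1
  | k + 1 =>
      aRec g k +
        ((Nat.doubleFactorial (6 * g - 3 - 2 * k) : ℚ) /
          (Nat.doubleFactorial (6 * g - 1) : ℚ)) * dZ g k

/-- The normalized 2-correlators `a(g,k)`: for `k ≤ ⌊(3g−1)/2⌋` they are given by the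
recursion, and for larger `k` by the symmetry `a(g,k) = a(g,3g−1−k)`. -/
noncomputable def aZ (g k : ℕ) : ℚ :=
  if k ≤ (3 * g - 1) / 2 then aRec g k else aRec g (3 * g - 1 - k)

/-! ### Auxiliary machinery -/

/-- The increment of the recursion. -/
noncomputable def sInc (g k : ℕ) : ℚ :=
  ((Nat.doubleFactorial (6 * g - 3 - 2 * k) : ℚ) /
    (Nat.doubleFactorial (6 * g - 1) : ℚ)) * dZ g k

lemma aRec_succ (g k : ℕ) : aRec g (k + 1) = aRec g k + sInc g k := rfl

lemma dZ_mod0 (g j : ℕ) : dZ g (3 * j) =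
    (-2) * ((Nat.doubleFactorial (6 * j + 1) : ℚ) / (Nat.factorial j : ℚ)) *
      ((Nat.factorial (g - 1) : ℚ) / (Nat.factorial (g - 1 - j) : ℚ)) := by
  rw [dZ, if_neg (by omega), if_pos (by omega)]
  simp only [show (3*j)/3 = j by omega]

lemma dZ_mod1 (g j : ℕ) : dZ g (3 * j + 1) =
    2 * ((Nat.doubleFactorial (6 * j + 3) : ℚ) / (Nat.factorial j : ℚ)) *
      ((Nat.factorial (g - 1) : ℚ) / (Nat.factorial (g - 1 - j) : ℚ)) := by
  rw [dZ, if_neg (by omega), if_neg (by omega)]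
  simp only [show (3*j+1-1)/3 = j by omega]

lemma dZ_mod2 (g j : ℕ) : dZ g (3 * j + 2) =
    ((Nat.doubleFactorial (6 * (j+1) - 1) : ℚ) / (Nat.factorial (j+1) : ℚ)) *
      ((Nat.factorial (g - (j+1)) : ℚ))⁻¹ * (Nat.factorial (g - 1) : ℚ) *
        ((g : ℚ) - 2 * ((j+1 : ℕ):ℚ)) := by
  rw [dZ, if_pos (by omega)]
  simp only [show (3*j+2+1)/3 = j+1 by omega]
  ring

lemma sInc_mod0_neg (g j : ℕ) : sInc g (3*j) < 0 := by
  rw [sInc, dZ_mod0]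
  have key : (0:ℚ) < ((Nat.doubleFactorial (6*g-3-2*(3*j)) : ℚ) /
      (Nat.doubleFactorial (6*g-1) : ℚ)) *
      (((Nat.doubleFactorial (6*j+1) : ℚ) / (Nat.factorial j : ℚ)) *
      ((Nat.factorial (g-1) : ℚ) / (Nat.factorial (g-1-j) : ℚ))) := by positivity
  nlinarith [key]

lemma sInc_mod1_pos (g j : ℕ) : 0 < sInc g (3*j+1) := by
  rw [sInc, dZ_mod1]
  positivity

lemma sInc_mod2_nonneg (g j : ℕ) (h : 2*j+2 ≤ g) : 0 ≤ sInc g (3*j+2) := by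
  rw [sInc, dZ_mod2]
  have hfac : (0:ℚ) ≤ (g:ℚ) - 2*(((j:ℚ))+1) := by
    have : (2*j+2 : ℚ) ≤ (g:ℚ) := by exact_mod_cast h
    linarith
  have hrest : (0:ℚ) < ((Nat.doubleFactorial (6*g-3-2*(3*j+2)) : ℚ) /
      (Nat.doubleFactorial (6*g-1) : ℚ)) *
      (((Nat.doubleFactorial (6*(j+1)-1) : ℚ) / (Nat.factorial (j+1) : ℚ)) *
      ((Nat.factorial (g-(j+1)) : ℚ))⁻¹ * (Nat.factorial (g-1) : ℚ)) := by positivity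
  push_cast
  nlinarith [mul_nonneg (le_of_lt hrest) hfac]

lemma tripleT_neg (g j : ℕ) (h : 2*j+2 ≤ g) :
    sInc g (3*j) + sInc g (3*j+1) + sInc g (3*j+2) < 0 := by
  have e0 : 6*g - 3 - 2*(3*j) = (6*g-7-6*j) + 2 + 2 := by omega
  have e1 : 6*g - 3 - 2*(3*j+1) = (6*g-7-6*j) + 2 := by omega
  have e2 : 6*g - 3 - 2*(3*j+2) = 6*g-7-6*j := by omega
  have e3 : g - (j+1) = g - 1 - j := by omega
  have e4 : 6*(j+1) - 1 = (6*j+3) + 2 := by omega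
  rw [sInc, sInc, sInc, dZ_mod0, dZ_mod1, dZ_mod2, e0, e1, e2, e3, e4,
      show 6*j+3 = 6*j+1+2 from rfl]
  simp only [Nat.doubleFactorial_add_two, Nat.factorial_succ]
  set n := 6*g-7-6*j with hn
  have hnq : (n:ℚ) = 6*(g:ℚ) - 6*(j:ℚ) - 7 := by
    have h2 : n + (6*j+7) = 6*g := by omega
    have h3 := congrArg (fun m : ℕ => (m:ℚ)) h2
    push_cast at h3; linarith
  have hgq : 2*(j:ℚ) + 2 ≤ (g:ℚ) := by exact_mod_cast h
  have hx : (0:ℚ) ≤ (j:ℚ) := by positivity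
  have hBR : -12*((j:ℚ)+1)*(6*(g:ℚ)-6*(j:ℚ)-5)*((g:ℚ)-2*(j:ℚ)-1)
      + (6*(j:ℚ)+5)*(6*(j:ℚ)+3)*((g:ℚ)-2*(j:ℚ)-2) < 0 := by
    have hu : (0:ℚ) ≤ (g:ℚ)-2*(j:ℚ)-2 := by linarith
    nlinarith [mul_nonneg hu hu, mul_nonneg hx hu, mul_nonneg (mul_nonneg hx hx) hu,
      mul_nonneg (mul_nonneg hx hu) hu, mul_nonneg hx hx]
  have key : ((Nat.doubleFactorial n : ℚ) * (Nat.doubleFactorial (6*j+1) : ℚ)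
        * (Nat.factorial (g-1) : ℚ))
      / ((Nat.doubleFactorial (6*g-1) : ℚ) * (Nat.factorial j : ℚ)
        * (Nat.factorial (g-1-j) : ℚ) * ((j:ℚ)+1)) *
      (-12*((j:ℚ)+1)*(6*(g:ℚ)-6*(j:ℚ)-5)*((g:ℚ)-2*(j:ℚ)-1)
      + (6*(j:ℚ)+5)*(6*(j:ℚ)+3)*((g:ℚ)-2*(j:ℚ)-2)) < 0 :=
    mul_neg_of_pos_of_neg (by positivity) hBR
  push_cast
  rw [hnq]
  convert key using 1
  field_simp
  ring

lemma tripleQ_pos (g j : ℕ) (h : 2*j+3 ≤ g) :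
    0 < sInc g (3*j+1) + sInc g (3*j+2) + sInc g (3*j+3) := by
  have hd : dZ g (3*j+3) = (-2) * ((Nat.doubleFactorial (6*(j+1) + 1) : ℚ)
      / (Nat.factorial (j+1) : ℚ)) *
      ((Nat.factorial (g - 1) : ℚ) / (Nat.factorial (g - 1 - (j+1)) : ℚ)) := by
    rw [show 3*j+3 = 3*(j+1) by ring, dZ_mod0]
  have e1 : 6*g - 3 - 2*(3*j+1) = (6*g-9-6*j) + 2 + 2 := by omega
  have e2 : 6*g - 3 - 2*(3*j+2) = (6*g-9-6*j) + 2 := by omega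
  have e3 : 6*g - 3 - 2*(3*j+3) = 6*g-9-6*j := by omega
  have e4 : g - (j+1) = (g-2-j) + 1 := by omega
  have e5 : g - 1 - (j+1) = g-2-j := by omega
  have e6 : g - 1 - j = (g-2-j) + 1 := by omega
  have e7 : 6*(j+1) - 1 = (6*j+3) + 2 := by omega
  have e8 : 6*(j+1) + 1 = (6*j+3) + 2 + 2 := by omega
  rw [sInc, sInc, sInc, dZ_mod1, dZ_mod2, hd, e1, e2, e3, e4, e5, e6, e7, e8]
  simp only [Nat.doubleFactorial_add_two, Nat.factorial_succ]
  set n := 6*g-9-6*j with hn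
  set m := g-2-j with hm
  have hnq : (n:ℚ) = 6*(g:ℚ) - 6*(j:ℚ) - 9 := by
    have h2 : n + (6*j+9) = 6*g := by omega
    have h3 := congrArg (fun t : ℕ => (t:ℚ)) h2
    push_cast at h3; linarith
  have hmq : (m:ℚ) = (g:ℚ) - (j:ℚ) - 2 := by
    have h2 : m + (j+2) = g := by omega
    have h3 := congrArg (fun t : ℕ => (t:ℚ)) h2
    push_cast at h3; linarith
  have hgq : 2*(j:ℚ) + 3 ≤ (g:ℚ) := by exact_mod_cast h
  have hx : (0:ℚ) ≤ (j:ℚ) := by positivity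
  have hBR : 0 < 2*((j:ℚ)+1)*(6*(g:ℚ)-6*(j:ℚ)-5)*(6*(g:ℚ)-6*(j:ℚ)-7)
      + (6*(j:ℚ)+5)*(6*(g:ℚ)-6*(j:ℚ)-7)*((g:ℚ)-2*(j:ℚ)-2)
      - 2*(6*(j:ℚ)+5)*(6*(j:ℚ)+7)*((g:ℚ)-(j:ℚ)-1) := by
    have hu : (0:ℚ) ≤ (g:ℚ)-2*(j:ℚ)-3 := by linarith
    nlinarith [mul_nonneg hx hu, mul_nonneg hx hx, mul_nonneg hu hu,
      mul_nonneg (mul_nonneg hx hu) hu, mul_nonneg (mul_nonneg hx hx) hu]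
  have hgj : (0:ℚ) < (g:ℚ)-(j:ℚ)-1 := by linarith
  have key : 0 < ((Nat.doubleFactorial n : ℚ) * (Nat.doubleFactorial (6*j+1) : ℚ)
        * (Nat.factorial (g-1) : ℚ))
      / ((Nat.doubleFactorial (6*g-1) : ℚ) * (Nat.factorial j : ℚ)
        * (Nat.factorial m : ℚ) * ((j:ℚ)+1) * ((g:ℚ)-(j:ℚ)-1)) *
      ((6*(j:ℚ)+3) *
      (2*((j:ℚ)+1)*(6*(g:ℚ)-6*(j:ℚ)-5)*(6*(g:ℚ)-6*(j:ℚ)-7)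
      + (6*(j:ℚ)+5)*(6*(g:ℚ)-6*(j:ℚ)-7)*((g:ℚ)-2*(j:ℚ)-2)
      - 2*(6*(j:ℚ)+5)*(6*(j:ℚ)+7)*((g:ℚ)-(j:ℚ)-1))) :=
    mul_pos (by positivity) (mul_pos (by positivity) hBR)
  push_cast
  rw [hnq, hmq]
  convert key using 1
  have hA : ((g:ℚ)-(j:ℚ)-1) ≠ 0 := ne_of_gt hgj
  have hB' : ((g:ℚ)-(j:ℚ)-2+1) ≠ 0 := by intro hC; rw [← hC] at hgj; linarith
  field_simp [hA, hB']
  ring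

lemma aRec_one (g : ℕ) (hg : 1 ≤ g) : aRec g 1 = 1 - 2/(6*(g:ℚ)-1) := by
  have h1 : aRec g 1 = aRec g 0 + sInc g 0 := aRec_succ g 0
  have h0 : dZ g 0 = -2 := by
    have h := dZ_mod0 g 0
    norm_num [Nat.doubleFactorial] at h
    rw [show dZ g 0 = dZ g (3*0) by norm_num, h,
        div_self (by positivity : ((Nat.factorial (g-1) : ℚ)) ≠ 0)]
    norm_num
  have e1 : 6*g - 3 - 2*0 = 6*g-3 := by omega
  have e2 : 6*g - 1 = (6*g-3) + 2 := by omega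
  have hc : ((6*g-3 : ℕ):ℚ) = 6*(g:ℚ) - 3 := by
    have h2 : (6*g-3) + 3 = 6*g := by omega
    have h3 := congrArg (fun t : ℕ => (t:ℚ)) h2
    push_cast at h3; linarith
  rw [h1, sInc, h0, e1, e2, Nat.doubleFactorial_add_two]
  have hdf : (0:ℚ) < (Nat.doubleFactorial (6*g-3) : ℚ) := by positivity
  have hden : (0:ℚ) < 6*(g:ℚ) - 1 := by
    have : (1:ℚ) ≤ (g:ℚ) := by exact_mod_cast hg
    linarith
  show (1:ℚ) + _ = _
  push_cast
  rw [hc, show 6*(g:ℚ)-3+2 = 6*(g:ℚ)-1 from by ring]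
  rw [mul_comm (6*(g:ℚ)-1) _, div_mul_eq_div_div, div_self hdf.ne']
  field_simp
  ring

lemma aRec_core (g : ℕ) (hg : 2 ≤ g) :
    ∀ m, 2 ≤ m → 2*m ≤ 3*g - 1 → aRec g 1 < aRec g m ∧ aRec g m < 1 := by
  intro m
  induction m using Nat.strong_induction_on with
  | _ m IH =>
    intro hm2 hmle
    have h0 : aRec g 0 = 1 := rfl
    rcases (show m % 3 = 0 ∨ m % 3 = 1 ∨ m % 3 = 2 by omega) with h|h|h
    · -- m = 3i+3
      obtain ⟨i, rfl⟩ : ∃ i, m = 3*i+3 := ⟨(m-3)/3, by omega⟩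
      have hig : 2*i+2 ≤ g := by omega
      have E1 : aRec g (3*i+1) = aRec g (3*i) + sInc g (3*i) := aRec_succ g (3*i)
      have E2 : aRec g (3*i+2) = aRec g (3*i+1) + sInc g (3*i+1) := by
        rw [show 3*i+2 = (3*i+1)+1 by omega, aRec_succ]
      have E3 : aRec g (3*i+3) = aRec g (3*i+2) + sInc g (3*i+2) := by
        rw [show 3*i+3 = (3*i+2)+1 by omega, aRec_succ]
      have s1 := sInc_mod1_pos g i
      have s2 := sInc_mod2_nonneg g i hig
      have t := tripleT_neg g i hig
      constructor
      · rcases Nat.eq_zero_or_pos i with hi|hi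
        · subst hi; norm_num at E2 E3 s1 s2 ⊢; linarith
        · have IH1 := IH (3*i+1) (by omega) (by omega) (by omega)
          linarith [IH1.1]
      · rcases Nat.eq_zero_or_pos i with hi|hi
        · subst hi; norm_num at E1 E2 E3 t ⊢; linarith
        · have IH0 := IH (3*i) (by omega) (by omega) (by omega)
          linarith [IH0.2]
    · -- m = 3i+4
      obtain ⟨i, rfl⟩ : ∃ i, m = 3*i+4 := ⟨(m-4)/3, by omega⟩
      have hig : 2*i+3 ≤ g := by omega
      have E1 : aRec g (3*i+2) = aRec g (3*i+1) + sInc g (3*i+1) := by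
        rw [show 3*i+2 = (3*i+1)+1 by omega, aRec_succ]
      have E2 : aRec g (3*i+3) = aRec g (3*i+2) + sInc g (3*i+2) := by
        rw [show 3*i+3 = (3*i+2)+1 by omega, aRec_succ]
      have E3 : aRec g (3*i+4) = aRec g (3*i+3) + sInc g (3*i+3) := by
        rw [show 3*i+4 = (3*i+3)+1 by omega, aRec_succ]
      constructor
      · have q := tripleQ_pos g i hig
        rcases Nat.eq_zero_or_pos i with hi|hi
        · subst hi; norm_num at E1 E2 E3 q ⊢; linarith
        · have IH1 := IH (3*i+1) (by omega) (by omega) (by omega)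
          linarith [IH1.1]
      · have s0 : sInc g (3*i+3) < 0 := by
          have := sInc_mod0_neg g (i+1)
          rwa [show 3*(i+1) = 3*i+3 by ring] at this
        have IH3 := IH (3*i+3) (by omega) (by omega) (by omega)
        linarith [IH3.2]
    · -- m = 3j+2
      obtain ⟨j, rfl⟩ : ∃ j, m = 3*j+2 := ⟨(m-2)/3, by omega⟩
      have hig : 2*j+2 ≤ g := by omega
      have E1 : aRec g (3*j+1) = aRec g (3*j) + sInc g (3*j) := aRec_succ g (3*j)
      have E2 : aRec g (3*j+2) = aRec g (3*j+1) + sInc g (3*j+1) := by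
        rw [show 3*j+2 = (3*j+1)+1 by omega, aRec_succ]
      have s1 := sInc_mod1_pos g j
      constructor
      · rcases Nat.eq_zero_or_pos j with hj|hj
        · subst hj; norm_num at E2 s1 ⊢; linarith
        · have IH1 := IH (3*j+1) (by omega) (by omega) (by omega)
          linarith [IH1.1]
      · have t := tripleT_neg g j hig
        have s2 := sInc_mod2_nonneg g j hig
        rcases Nat.eq_zero_or_pos j with hj|hj
        · subst hj; norm_num at E1 E2 t s2 ⊢; linarith
        · have IH0 := IH (3*j) (by omega) (by omega) (by omega)
          linarith [IH0.2]

/-- For every integer `g ≥ 1` and every integer `k` with `2 ≤ k ≤ 3g−3`, the strict bounds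
`1 − 2/(6g−1) < a(g,k) < 1` hold. Moreover `a(g,0) = a(g,3g−1) = 1` and
`a(g,1) = a(g,3g−2) = 1 − 2/(6g−1)`. -/
theorem volQ_normalized_two_correlator_bounds (g : ℕ) (hg : 1 ≤ g) :
    (∀ k : ℕ, 2 ≤ k → k ≤ 3 * g - 3 →
      1 - 2 / (6 * (g : ℚ) - 1) < aZ g k ∧ aZ g k < 1) ∧
    aZ g 0 = 1 ∧ aZ g (3 * g - 1) = 1 ∧
    aZ g 1 = 1 - 2 / (6 * (g : ℚ) - 1) ∧
    aZ g (3 * g - 2) = 1 - 2 / (6 * (g : ℚ) - 1) := by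
  have ha1 : aRec g 1 = 1 - 2/(6*(g:ℚ)-1) := aRec_one g hg
  refine ⟨?_, ?_, ?_, ?_, ?_⟩
  · intro k hk2 hk3
    have hg2 : 2 ≤ g := by omega
    rw [aZ]
    split_ifs with hsplit
    · have hc := aRec_core g hg2 k hk2 (by omega)
      exact ⟨ha1 ▸ hc.1, hc.2⟩
    · have hk'2 : 2 ≤ 3*g-1-k := by omega
      have hk'le : 2*(3*g-1-k) ≤ 3*g-1 := by omega
      have hc := aRec_core g hg2 (3*g-1-k) hk'2 hk'le
      exact ⟨ha1 ▸ hc.1, hc.2⟩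
  · rw [aZ, if_pos (by omega)]; rfl
  · rw [aZ, if_neg (by omega), show 3*g-1-(3*g-1) = 0 by omega]; rfl
  · rw [aZ, if_pos (by omega)]; exact ha1
  · rw [aZ]
    split_ifs with h
    · rw [show 3*g-2 = 1 by omega]; exact ha1
    · rw [show 3*g-1-(3*g-2) = 1 by omega]; exact ha1
end

section
/- For every integer g ≥ 1 the quantity R(g,j) is strictly monotonically decreasing in j on the range {0, 1, …, ⌊(g−1)/2⌋}: for all integers j, j′ with 0 ≤ j < j′ ≤ ⌊(g−1)/2⌋ one has R(g,j′) < R(g,j). -/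
private lemma chainQ3 (X0 X1 X2 X3 a1 a2 a3 b1 b2 b3 : ℚ)
    (h1 : X1 * a1 = X0 * b1) (h2 : X2 * a2 = X1 * b2) (h3 : X3 * a3 = X2 * b3) :
    X3 * (a1 * a2 * a3) = X0 * (b1 * b2 * b3) := by
  linear_combination a1 * a2 * h3 + a1 * b3 * h2 + b2 * b3 * h1

private lemma chainQ6 (X0 X1 X2 X3 X4 X5 X6 a1 a2 a3 a4 a5 a6 b1 b2 b3 b4 b5 b6 : ℚ)
    (h1 : X1 * a1 = X0 * b1) (h2 : X2 * a2 = X1 * b2) (h3 : X3 * a3 = X2 * b3)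
    (h4 : X4 * a4 = X3 * b4) (h5 : X5 * a5 = X4 * b5) (h6 : X6 * a6 = X5 * b6) :
    X6 * (a1 * a2 * a3 * a4 * a5 * a6) = X0 * (b1 * b2 * b3 * b4 * b5 * b6) := by
  linear_combination a1*a2*a3*a4*a5*h6 + a1*a2*a3*a4*b6*h5 + a1*a2*a3*b5*b6*h4
    + a1*a2*b4*b5*b6*h3 + a1*b3*b4*b5*b6*h2 + b2*b3*b4*b5*b6*h1

private lemma poly_ineq (J T : ℚ) (hJ : 0 ≤ J) (hT : 0 ≤ T) :
    ((3*J+9+3*T)*(3*J+8+3*T)*(3*J+7+3*T)) * (J+3+T)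
      * ((6*J+1)*(6*J+2)*(6*J+3)*(6*J+4)*(6*J+5)*(6*J+6))
    < ((3*J+1)*(3*J+2)*(3*J+3)) * (J+1)
      * ((6*J+18+6*T)*(6*J+17+6*T)*(6*J+16+6*T)*(6*J+15+6*T)*(6*J+14+6*T)*(6*J+13+6*T)) := by
  have key : ((3*J+1)*(3*J+2)*(3*J+3)) * (J+1)
      * ((6*J+18+6*T)*(6*J+17+6*T)*(6*J+16+6*T)*(6*J+15+6*T)*(6*J+14+6*T)*(6*J+13+6*T))
      = ((3*J+9+3*T)*(3*J+8+3*T)*(3*J+7+3*T)) * (J+3+T)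
      * ((6*J+1)*(6*J+2)*(6*J+3)*(6*J+4)*(6*J+5)*(6*J+6))
      + (79107840 + 186972192*T + 183412944*T^2 + 95605920*T^3 + 27935280*T^4 + 4339008*T^5 + 279936*T^6 + 692246304*J + 1569020544*J*T + 1471793112*J*T^2 + 731426112*J*T^3 + 203114952*J*T^4 + 29883168*J*T^5 + 1819584*J*T^6 + 2460058992*J^2 + 5261107896*J^2*T + 4627517040*J^2*T^2 + 2141092440*J^2*T^3 + 548981712*J^2*T^4 + 73833120*J^2*T^5 + 4059072*J^2*T^6 + 4727528064*J^3 + 9365305536*J^3*T + 7542074592*J^3*T^2 + 3149108928*J^3*T^3 + 714974040*J^3*T^4 + 82931040*J^3*T^5 + 3779136*J^3*T^6 + 5459241888*J^4 + 9796037616*J^4*T + 7000460640*J^4*T^2 + 2521785960*J^4*T^3 + 473441760*J^4*T^4 + 42200352*J^4*T^5 + 1259712*J^4*T^6 + 3949375968*J^5 + 6238778112*J^5*T + 3787166664*J^5*T^2 + 1097139168*J^5*T^3 + 149905728*J^5*T^4 + 7558272*J^5*T^5 + 1797504048*J^6 + 2406907224*J^6*T + 1162224288*J^6*T^2 + 239345280*J^6*T^3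 + 17635968*J^6*T^4 + 498566016*J^7 + 536497344*J^7*T + 183917952*J^7*T^2 + 20155392*J^7*T^3 + 76842432*J^8 + 61096032*J^8*T + 11337408*J^8*T^2 + 5038848*J^9 + 2519424*J^9*T) := by ring
  rw [key]
  have hpos : (0:ℚ) < (79107840 + 186972192*T + 183412944*T^2 + 95605920*T^3 + 27935280*T^4 + 4339008*T^5 + 279936*T^6 + 692246304*J + 1569020544*J*T + 1471793112*J*T^2 + 731426112*J*T^3 + 203114952*J*T^4 + 29883168*J*T^5 + 1819584*J*T^6 + 2460058992*J^2 + 5261107896*J^2*T + 4627517040*J^2*T^2 + 2141092440*J^2*T^3 + 548981712*J^2*T^4 + 73833120*J^2*T^5 + 4059072*J^2*T^6 + 4727528064*J^3 + 9365305536*J^3*T + 7542074592*J^3*T^2 + 3149108928*J^3*T^3 + 714974040*J^3*T^4 + 82931040*J^3*T^5 + 3779136*J^3*T^6 + 5459241888*J^4 + 9796037616*J^4*T + 7000460640*J^4*T^2 + 2521785960*J^4*T^3 + 473441760*J^4*T^4 + 42200352*J^4*T^5 + 1259712*J^4*T^6 + 3949375968*J^5 + 6238778112*J^5*T + 3787166664*J^5*T^2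 + 1097139168*J^5*T^3 + 149905728*J^5*T^4 + 7558272*J^5*T^5 + 1797504048*J^6 + 2406907224*J^6*T + 1162224288*J^6*T^2 + 239345280*J^6*T^3 + 17635968*J^6*T^4 + 498566016*J^7 + 536497344*J^7*T + 183917952*J^7*T^2 + 20155392*J^7*T^3 + 76842432*J^8 + 61096032*J^8*T + 11337408*J^8*T^2 + 5038848*J^9 + 2519424*J^9*T) := by positivity
  linarith

private lemma choose_step (n k m : ℕ) (h : n - k = m) (hk : k ≤ n) :
    (Nat.choose n (k+1) : ℚ) * (k+1) = (Nat.choose n k : ℚ) * m := by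
  have := Nat.choose_succ_right_eq n k
  rw [h] at this
  exact_mod_cast congrArg (Nat.cast : ℕ → ℚ) this

/-- `R(g,j) = C(3g,3j)·C(g,j)/C(6g,6j)`. -/
noncomputable def Rgj (g j : ℕ) : ℚ :=
  ((Nat.choose (3 * g) (3 * j) : ℚ) * (Nat.choose g j : ℚ)) / (Nat.choose (6 * g) (6 * j) : ℚ)

private lemma Rgj_step (g j : ℕ) (h : 2*j+3 ≤ g) : Rgj g (j+1) < Rgj g j := by
  obtain ⟨t, rfl⟩ : ∃ t, g = 2*j+3+t := ⟨g - (2*j+3), by omega⟩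
  set G := 2*j+3+t with hG
  unfold Rgj
  have h6 : 6*(j+1) ≤ 6*G := by omega
  have h6' : 6*j ≤ 6*G := by omega
  have hd1 : (0:ℚ) < (Nat.choose (6*G) (6*(j+1)) : ℚ) := by
    exact_mod_cast Nat.choose_pos h6
  have hd0 : (0:ℚ) < (Nat.choose (6*G) (6*j) : ℚ) := by
    exact_mod_cast Nat.choose_pos h6'
  rw [div_lt_div_iff₀ hd1 hd0]
  -- single step identities
  have c1 : (Nat.choose (3*G) (3*j+1) : ℚ) * (3*j+1) = (Nat.choose (3*G) (3*j) : ℚ) * (3*j+9+3*t) := by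
    exact_mod_cast choose_step (3*G) (3*j) (3*j+9+3*t) (by omega) (by omega)
  have c2 : (Nat.choose (3*G) (3*j+2) : ℚ) * (3*j+2) = (Nat.choose (3*G) (3*j+1) : ℚ) * (3*j+8+3*t) := by
    exact_mod_cast choose_step (3*G) (3*j+1) (3*j+8+3*t) (by omega) (by omega)
  have c3 : (Nat.choose (3*G) (3*j+3) : ℚ) * (3*j+3) = (Nat.choose (3*G) (3*j+2) : ℚ) * (3*j+7+3*t) := by
    exact_mod_cast choose_step (3*G) (3*j+2) (3*j+7+3*t) (by omega) (by omega)
  have d1 : (Nat.choose G (j+1) : ℚ) * (j+1) = (Nat.choose G j : ℚ) * (j+3+t) := by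
    exact_mod_cast choose_step (G) (j) (j+3+t) (by omega) (by omega)
  have e1 : (Nat.choose (6*G) (6*j+1) : ℚ) * (6*j+1) = (Nat.choose (6*G) (6*j) : ℚ) * (6*j+18+6*t) := by
    exact_mod_cast choose_step (6*G) (6*j) (6*j+18+6*t) (by omega) (by omega)
  have e2 : (Nat.choose (6*G) (6*j+2) : ℚ) * (6*j+2) = (Nat.choose (6*G) (6*j+1) : ℚ) * (6*j+17+6*t) := by
    exact_mod_cast choose_step (6*G) (6*j+1) (6*j+17+6*t) (by omega) (by omega)
  have e3 : (Nat.choose (6*G) (6*j+3) : ℚ) * (6*j+3) = (Nat.choose (6*G) (6*j+2) : ℚ) * (6*j+16+6*t) := by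
    exact_mod_cast choose_step (6*G) (6*j+2) (6*j+16+6*t) (by omega) (by omega)
  have e4 : (Nat.choose (6*G) (6*j+4) : ℚ) * (6*j+4) = (Nat.choose (6*G) (6*j+3) : ℚ) * (6*j+15+6*t) := by
    exact_mod_cast choose_step (6*G) (6*j+3) (6*j+15+6*t) (by omega) (by omega)
  have e5 : (Nat.choose (6*G) (6*j+5) : ℚ) * (6*j+5) = (Nat.choose (6*G) (6*j+4) : ℚ) * (6*j+14+6*t) := by
    exact_mod_cast choose_step (6*G) (6*j+4) (6*j+14+6*t) (by omega) (by omega)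
  have e6 : (Nat.choose (6*G) (6*j+6) : ℚ) * (6*j+6) = (Nat.choose (6*G) (6*j+5) : ℚ) * (6*j+13+6*t) := by
    exact_mod_cast choose_step (6*G) (6*j+5) (6*j+13+6*t) (by omega) (by omega)
  have H3 : (Nat.choose (3*G) (3*j+3) : ℚ) * ((3*(j:ℚ)+1) * (3*j+2) * (3*j+3))
      = (Nat.choose (3*G) (3*j) : ℚ) * ((3*(j:ℚ)+9+3*t) * (3*j+8+3*t) * (3*j+7+3*t)) := by
    exact chainQ3 _ _ _ _ _ _ _ _ _ _ c1 c2 c3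
  have H6 : (Nat.choose (6*G) (6*j+6) : ℚ)
        * ((6*(j:ℚ)+1) * (6*j+2) * (6*j+3) * (6*j+4) * (6*j+5) * (6*j+6))
      = (Nat.choose (6*G) (6*j) : ℚ)
        * ((6*(j:ℚ)+18+6*t) * (6*j+17+6*t) * (6*j+16+6*t) * (6*j+15+6*t) * (6*j+14+6*t) * (6*j+13+6*t)) := by
    exact chainQ6 _ _ _ _ _ _ _ _ _ _ _ _ _ _ _ _ _ _ _ e1 e2 e3 e4 e5 e6
  -- abbreviations
  set X0 : ℚ := (Nat.choose (3*G) (3*j) : ℚ) with hX0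
  set X3 : ℚ := (Nat.choose (3*G) (3*j+3) : ℚ) with hX3
  set Y0 : ℚ := (Nat.choose G j : ℚ) with hY0
  set Y1 : ℚ := (Nat.choose G (j+1) : ℚ) with hY1
  set Z0 : ℚ := (Nat.choose (6*G) (6*j) : ℚ) with hZ0
  set Z6 : ℚ := (Nat.choose (6*G) (6*j+6) : ℚ) with hZ6
  have h36 : 3*(j+1) = 3*j+3 := by ring
  have h66 : 6*(j+1) = 6*j+6 := by ring
  rw [h36, h66]
  have hJ : (0:ℚ) ≤ (j:ℚ) := by positivity
  have hT : (0:ℚ) ≤ (t:ℚ) := by positivity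
  have hD : (0:ℚ) < ((3*(j:ℚ)+1) * (3*j+2) * (3*j+3)) * ((j:ℚ)+1)
      * ((6*(j:ℚ)+1) * (6*j+2) * (6*j+3) * (6*j+4) * (6*j+5) * (6*j+6)) := by positivity
  have hX0pos : (0:ℚ) < X0 := by
    rw [hX0]; exact_mod_cast Nat.choose_pos (by omega : 3*j ≤ 3*G)
  have hY0pos : (0:ℚ) < Y0 := by
    rw [hY0]; exact_mod_cast Nat.choose_pos (by omega : j ≤ G)
  have key := poly_ineq (j:ℚ) (t:ℚ) hJ hT
  have main : X3 * Y1 * Z0 *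
      (((3*(j:ℚ)+1) * (3*j+2) * (3*j+3)) * ((j:ℚ)+1)
        * ((6*(j:ℚ)+1) * (6*j+2) * (6*j+3) * (6*j+4) * (6*j+5) * (6*j+6)))
      < X0 * Y0 * Z6 *
      (((3*(j:ℚ)+1) * (3*j+2) * (3*j+3)) * ((j:ℚ)+1)
        * ((6*(j:ℚ)+1) * (6*j+2) * (6*j+3) * (6*j+4) * (6*j+5) * (6*j+6))) := by
    have eL : X3 * Y1 * Z0 *
        (((3*(j:ℚ)+1) * (3*j+2) * (3*j+3)) * ((j:ℚ)+1)
          * ((6*(j:ℚ)+1) * (6*j+2) * (6*j+3) * (6*j+4) * (6*j+5) * (6*j+6)))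
        = (X0 * Y0 * Z0) *
        (((3*(j:ℚ)+9+3*t) * (3*j+8+3*t) * (3*j+7+3*t)) * ((j:ℚ)+3+t)
          * ((6*(j:ℚ)+1) * (6*j+2) * (6*j+3) * (6*j+4) * (6*j+5) * (6*j+6))) := by
      have d1' : Y1 * ((j:ℚ)+1) = Y0 * ((j:ℚ)+3+t) := d1
      linear_combination (Y1 * ((j:ℚ)+1) * Z0 *
          ((6*(j:ℚ)+1) * (6*j+2) * (6*j+3) * (6*j+4) * (6*j+5) * (6*j+6))) * H3
        + (X0 * ((3*(j:ℚ)+9+3*t) * (3*j+8+3*t) * (3*j+7+3*t)) * Z0 *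
          ((6*(j:ℚ)+1) * (6*j+2) * (6*j+3) * (6*j+4) * (6*j+5) * (6*j+6))) * d1'
    have eR : X0 * Y0 * Z6 *
        (((3*(j:ℚ)+1) * (3*j+2) * (3*j+3)) * ((j:ℚ)+1)
          * ((6*(j:ℚ)+1) * (6*j+2) * (6*j+3) * (6*j+4) * (6*j+5) * (6*j+6)))
        = (X0 * Y0 * Z0) *
        (((3*(j:ℚ)+1) * (3*j+2) * (3*j+3)) * ((j:ℚ)+1)
          * ((6*(j:ℚ)+18+6*t) * (6*j+17+6*t) * (6*j+16+6*t) * (6*j+15+6*t) * (6*j+14+6*t) * (6*j+13+6*t))) := by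
      linear_combination (X0 * Y0 * ((3*(j:ℚ)+1) * (3*j+2) * (3*j+3)) * ((j:ℚ)+1)) * H6
    rw [eL, eR]
    have hZ0pos : (0:ℚ) < Z0 := hd0
    have hK : (0:ℚ) < X0 * Y0 * Z0 := by positivity
    exact mul_lt_mul_of_pos_left key hK
  exact lt_of_mul_lt_mul_right main hD.le

/-- For every integer `g ≥ 1`, the quantity `R(g,j)` is strictly monotonically decreasing
in `j` on the range `{0, 1, …, ⌊(g−1)/2⌋}`. -/
theorem Rgj_strict_anti (g : ℕ) (hg : 1 ≤ g) :
    ∀ j j' : ℕ, j < j' → j' ≤ (g - 1) / 2 → Rgj g j' < Rgj g j := by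
  intro j j' hlt hle
  induction j' with
  | zero => omega
  | succ k ih =>
    have hstep : Rgj g (k+1) < Rgj g k := Rgj_step g k (by omega)
    rcases Nat.lt_or_ge j k with h | h
    · exact hstep.trans (ih h (by omega))
    · have : j = k := by omega
      subst this
      exact hstep
end

section
/- For every integer g ≥ 5 the following strict inequalities hold: R(g,2)·(g−3)/2 < ε_below(g) and R(g,2)·(3g−11)/3 < ε_above(g). -/
/-- `ε_below(g) = 27(68g³−308g²+519g−280)/((6g−1)(6g−3)(6g−5)(6g−7)(6g−9))`. -/
noncomputable def epsBelow (g : ℕ) : ℚ :=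
  27 * (68 * (g : ℚ) ^ 3 - 308 * (g : ℚ) ^ 2 + 519 * (g : ℚ) - 280) /
    ((6 * (g : ℚ) - 1) * (6 * (g : ℚ) - 3) * (6 * (g : ℚ) - 5) * (6 * (g : ℚ) - 7) *
      (6 * (g : ℚ) - 9))

/-- `ε_above(g) = 9(g−2)(288g³−780g²+1012g−525)/((6g−1)(6g−3)(6g−5)(6g−7)(6g−9))`. -/
noncomputable def epsAbove (g : ℕ) : ℚ :=
  9 * ((g : ℚ) - 2) * (288 * (g : ℚ) ^ 3 - 780 * (g : ℚ) ^ 2 + 1012 * (g : ℚ) - 525) /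
    ((6 * (g : ℚ) - 1) * (6 * (g : ℚ) - 3) * (6 * (g : ℚ) - 5) * (6 * (g : ℚ) - 7) *
      (6 * (g : ℚ) - 9))

lemma ch6 (m : ℕ) : (Nat.choose (3*m+15) 6 : ℚ) =
    ((3*m+15)*(3*m+14)*(3*m+13)*(3*m+12)*(3*m+11)*(3*m+10) : ℚ) / 720 := by
  have hd : Nat.descFactorial (3*m+15) 6 =
      (3*m+15)*(3*m+14)*(3*m+13)*(3*m+12)*(3*m+11)*(3*m+10) := by
    simp only [Nat.descFactorial_succ, Nat.descFactorial_zero, Nat.sub_zero,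
      show 3*m+15-1=3*m+14 from by omega, show 3*m+15-2=3*m+13 from by omega,
      show 3*m+15-3=3*m+12 from by omega, show 3*m+15-4=3*m+11 from by omega,
      show 3*m+15-5=3*m+10 from by omega]
    ring
  have h := Nat.descFactorial_eq_factorial_mul_choose (3*m+15) 6
  rw [hd, show Nat.factorial 6 = 720 from by decide] at h
  have h' : ((3*m+15)*(3*m+14)*(3*m+13)*(3*m+12)*(3*m+11)*(3*m+10) : ℚ)
      = 720 * (Nat.choose (3*m+15) 6 : ℚ) := by exact_mod_cast congrArg (Nat.cast : ℕ → ℚ) h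
  rw [h']; ring

lemma ch2 (m : ℕ) : (Nat.choose (m+5) 2 : ℚ) = ((m+5)*(m+4) : ℚ) / 2 := by
  have hd : Nat.descFactorial (m+5) 2 = (m+5)*(m+4) := by
    simp only [Nat.descFactorial_succ, Nat.descFactorial_zero, Nat.sub_zero,
      show m+5-1=m+4 from by omega]
    ring
  have h := Nat.descFactorial_eq_factorial_mul_choose (m+5) 2
  rw [hd, show Nat.factorial 2 = 2 from by decide] at h
  have h' : ((m+5)*(m+4) : ℚ) = 2 * (Nat.choose (m+5) 2 : ℚ) := by
    exact_mod_cast congrArg (Nat.cast : ℕ → ℚ) h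
  rw [h']; ring

lemma ch12 (m : ℕ) : (Nat.choose (6*m+30) 12 : ℚ) =
    ((6*m+30)*(6*m+29)*(6*m+28)*(6*m+27)*(6*m+26)*(6*m+25)*(6*m+24)*(6*m+23)*(6*m+22)*(6*m+21)*(6*m+20)*(6*m+19) : ℚ) / 479001600 := by
  have hd : Nat.descFactorial (6*m+30) 12 =
      (6*m+30)*(6*m+29)*(6*m+28)*(6*m+27)*(6*m+26)*(6*m+25)*(6*m+24)*(6*m+23)*(6*m+22)*(6*m+21)*(6*m+20)*(6*m+19) := by
    simp only [Nat.descFactorial_succ, Nat.descFactorial_zero, Nat.sub_zero,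
      show 6*m+30-1=6*m+29 from by omega, show 6*m+30-2=6*m+28 from by omega,
      show 6*m+30-3=6*m+27 from by omega, show 6*m+30-4=6*m+26 from by omega,
      show 6*m+30-5=6*m+25 from by omega, show 6*m+30-6=6*m+24 from by omega,
      show 6*m+30-7=6*m+23 from by omega, show 6*m+30-8=6*m+22 from by omega,
      show 6*m+30-9=6*m+21 from by omega, show 6*m+30-10=6*m+20 from by omega,
      show 6*m+30-11=6*m+19 from by omega]
    ring
  have h := Nat.descFactorial_eq_factorial_mul_choose (6*m+30) 12
  rw [hd, show Nat.factorial 12 = 479001600 from by norm_num [Nat.factorial]] at h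
  have h' : ((6*m+30)*(6*m+29)*(6*m+28)*(6*m+27)*(6*m+26)*(6*m+25)*(6*m+24)*(6*m+23)*(6*m+22)*(6*m+21)*(6*m+20)*(6*m+19) : ℚ)
      = 479001600 * (Nat.choose (6*m+30) 12 : ℚ) := by
    exact_mod_cast congrArg (Nat.cast : ℕ → ℚ) h
  rw [h']; ring

lemma hRval (m : ℕ) : Rgj (m+5) 2 =
    10395 * ((m:ℚ)+5) * ((m:ℚ)+4) /
      (2*(6*(m:ℚ)+29)*(6*(m:ℚ)+27)*(6*(m:ℚ)+25)*(6*(m:ℚ)+23)*(6*(m:ℚ)+21)*(6*(m:ℚ)+19)) := by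
  have e1 : 3*(m+5) = 3*m+15 := by ring
  have e2 : 6*(m+5) = 6*m+30 := by ring
  rw [Rgj, e1, e2, show 3*2 = 6 from rfl, show 6*2 = 12 from rfl, ch6, ch2, ch12]
  set x := (m:ℚ) with hx
  have hx0 : (0:ℚ) ≤ x := by positivity
  have p1 : (6*x+29) > 0 := by linarith
  field_simp
  ring

/-- For every integer `g ≥ 5`, `R(g,2)·(g−3)/2 < ε_below(g)` and
`R(g,2)·(3g−11)/3 < ε_above(g)`. -/
theorem Rgj_two_lt_eps (g : ℕ) (hg : 5 ≤ g) :
    Rgj g 2 * ((g : ℚ) - 3) / 2 < epsBelow g ∧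
    Rgj g 2 * (3 * (g : ℚ) - 11) / 3 < epsAbove g := by
  obtain ⟨m, rfl⟩ : ∃ m, g = m + 5 := ⟨g - 5, by omega⟩
  rw [hRval, epsBelow, epsAbove]
  push_cast
  set x := (m:ℚ) with hxdef
  have hx : (0:ℚ) ≤ x := by rw [hxdef]; positivity
  have hgx : ((m:ℚ)+5) = x + 5 := rfl
  rw [hgx]
  have d1 : (0:ℚ) < 6*x+29 := by linarith
  have d2 : (0:ℚ) < 6*x+27 := by linarith
  have d3 : (0:ℚ) < 6*x+25 := by linarith
  have d4 : (0:ℚ) < 6*x+23 := by linarith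
  have d5 : (0:ℚ) < 6*x+21 := by linarith
  have d6 : (0:ℚ) < 6*x+19 := by linarith
  have e1 : 6*(x+5) - 1 = 6*x+29 := by ring
  have e2 : 6*(x+5) - 3 = 6*x+27 := by ring
  have e3 : 6*(x+5) - 5 = 6*x+25 := by ring
  have e4 : 6*(x+5) - 7 = 6*x+23 := by ring
  have e5 : 6*(x+5) - 9 = 6*x+21 := by ring
  rw [e1, e2, e3, e4, e5]
  have hD : (0:ℚ) < (6*x+29)*(6*x+27)*(6*x+25)*(6*x+23)*(6*x+21) := by positivity
  have hD6 : (0:ℚ) < 2*(6*x+29)*(6*x+27)*(6*x+25)*(6*x+23)*(6*x+21)*(6*x+19) := by positivity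
  constructor
  · have key : 10395*(x+5)*(x+4)*((x+5)-3) <
        108*(68*(x+5)^3 - 308*(x+5)^2 + 519*(x+5) - 280)*(6*x+19) := by nlinarith [sq_nonneg x, mul_nonneg hx hx, mul_nonneg (mul_nonneg hx hx) hx]
    rw [div_mul_eq_mul_div, div_div, div_lt_div_iff₀ (by positivity) hD]
    have h2 := mul_lt_mul_of_pos_right key hD
    ring_nf at h2 ⊢
    linarith
  · have key : 10395*(x+5)*(x+4)*(3*(x+5)-11) <
        54*((x+5)-2)*(288*(x+5)^3 - 780*(x+5)^2 + 1012*(x+5) - 525)*(6*x+19) := by nlinarith [sq_nonneg x, mul_nonneg hx hx, mul_nonneg (mul_nonneg hx hx) hx]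
    rw [div_mul_eq_mul_div, div_div, div_lt_div_iff₀ (by positivity) hD]
    have h2 := mul_lt_mul_of_pos_right key hD
    ring_nf at h2 ⊢
    linarith
end

section
/- The sum S(g) = ∑_{i=1}^{g−1} C(g,i)·C(3g−4, 3i−2) satisfies S(g) ~ 2^{4g−4}/√(6πg) as g → ∞, i.e. S(g)·√(6πg)/2^{4g−4} tends to 1 as the integer g tends to infinity. -/
/-!
Writing `cos x = (e^{ix} + e^{-ix}) / 2` and expanding both powers binomially, the constant
Fourier coefficient of `cos (t/2)^(3g-4) · cos (3t/2)^g` is `S(g) / 2^(4g-4)`: the frequency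
of the term indexed by `(j, i)` is `j + 2 - 3i`, which vanishes exactly for `j = 3i - 2`.
Hence `∫_{-π}^{π} cos (t/2)^(3g-4) cos (3t/2)^g dt = 2π S(g) / 2^(4g-4)`, and the asymptotics
follow from Laplace's method: after substituting `t = u / √g` the integrand tends to
`exp (-3u²/2)`, because `cos (c/√g)^g → exp (-c²/2)`, and it is dominated by
`exp (-u²/(2π²))`, because `cos x ≤ 1 - 2x²/π²` on `[-π, π]`. So
`√g ∫ … → ∫ exp (-3u²/2) du = √(2π/3)`.
-/

open Filter

/-- `S(g) = ∑_{i=1}^{g−1} C(g,i)·C(3g−4,3i−2)`. -/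
noncomputable def Ssum (g : ℕ) : ℝ :=
  ∑ i ∈ Finset.Icc 1 (g - 1), (Nat.choose g i : ℝ) * (Nat.choose (3 * g - 4) (3 * i - 2) : ℝ)

open Real MeasureTheory Topology Finset
open Complex (I)

lemma integral_exp_int_mul_I (k : ℤ) :
    ∫ t in -π..π, Complex.exp (k * t * I) = if k = 0 then 2 * (π : ℂ) else 0 := by
  split_ifs with hk
  · simp [hk]; ring
  · have hkI : (k : ℂ) * I ≠ 0 := by simp [hk]
    have hperiod : Complex.exp (k * I * π) = Complex.exp (k * I * (-π : ℝ)) := by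
      rw [show (k : ℂ) * I * π = k * I * (-π : ℝ) + k * (2 * π * I) by
        push_cast; ring, Complex.exp_add, Complex.exp_int_mul_two_pi_mul_I, mul_one]
    simp_rw [mul_right_comm _ _ I]
    rw [integral_exp_mul_complex hkI, hperiod, sub_self, zero_div]

lemma integral_sum_exp_int_mul_I {ι : Type*} (s : Finset ι) (c : ι → ℂ) (k : ι → ℤ) :
    ∫ t in -π..π, ∑ p ∈ s, c p * Complex.exp (k p * t * I)
      = 2 * (π : ℂ) * ∑ p ∈ s with k p = 0, c p := by
  rw [intervalIntegral.integral_finsetSum fun p _ =>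
    (by fun_prop : Continuous fun t : ℝ => c p * Complex.exp (k p * t * I)).intervalIntegrable
      _ _]
  simp_rw [intervalIntegral.integral_const_mul, integral_exp_int_mul_I, sum_filter, mul_sum]
  refine sum_congr rfl fun p _ => ?_
  split_ifs <;> ring

lemma Complex.cos_pow_eq_sum (x : ℂ) (n : ℕ) :
    Complex.cos x ^ n
      = (∑ j ∈ range (n + 1), (n.choose j : ℂ) * Complex.exp ((2 * j - n) * x * I))
        / 2 ^ n := by
  rw [Complex.cos, div_pow, add_pow]
  congr 1
  refine sum_congr rfl fun j hj => ?_
  have hjn : j ≤ n := Nat.lt_succ_iff.mp (mem_range.mp hj)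
  rw [← Complex.exp_nat_mul, ← Complex.exp_nat_mul, ← Complex.exp_add, Nat.cast_sub hjn]
  ring_nf

lemma cos_pow_mul_cos_pow_eq_sum (a b : ℕ) (d : ℤ) (hd : a + 2 * d = 3 * b) (t : ℝ) :
    (Complex.cos (t / 2) ^ a * Complex.cos (3 * t / 2) ^ b : ℂ)
      = (∑ p ∈ range (a + 1) ×ˢ range (b + 1), (a.choose p.1 * b.choose p.2 : ℂ)
          * Complex.exp ((p.1 + d - 3 * p.2 : ℤ) * t * I)) / 2 ^ (a + b) := by
  rw [← Complex.cos_neg (3 * t / 2), Complex.cos_pow_eq_sum, Complex.cos_pow_eq_sum,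
    div_mul_div_comm, ← pow_add, sum_mul_sum, sum_product]
  congr 1
  refine sum_congr rfl fun j _ => sum_congr rfl fun m _ => ?_
  rw [mul_mul_mul_comm, ← Complex.exp_add]
  have hd' : (a : ℂ) + 2 * d = 3 * b := by exact_mod_cast hd
  congr 2
  push_cast
  linear_combination (-(t : ℂ) * I / 2) * hd'

noncomputable def ssumIntegrand (g : ℕ) (t : ℝ) : ℝ :=
  cos (t / 2) ^ (3 * g - 4) * cos (3 * t / 2) ^ g

lemma sum_choose_mul_choose_filter_eq_Ssum (g : ℕ) :
    ∑ p ∈ range (3 * g - 4 + 1) ×ˢ range (g + 1) with (p.1 + 2 - 3 * p.2 : ℤ) = 0,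
      ((3 * g - 4).choose p.1 * g.choose p.2 : ℂ) = Ssum g := by
  rw [Ssum, Complex.ofReal_sum]
  refine sum_nbij' Prod.snd (fun i => (3 * i - 2, i)) ?_ ?_ ?_ ?_ ?_ <;>
    simp only [mem_filter, mem_product, mem_range, mem_Icc, Prod.forall, Prod.mk.injEq, and_true,
      implies_true]
  · intro j m ⟨_, h⟩; omega
  · intro i _; omega
  · intro j m ⟨_, h⟩; omega
  · intro j m ⟨_, h⟩
    obtain rfl : j = 3 * m - 2 := by omega
    push_cast; ring

lemma integral_ssumIntegrand {g : ℕ} (hg : 2 ≤ g) :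
    ∫ t in -π..π, ssumIntegrand g t = 2 * π * Ssum g / 2 ^ (4 * g - 4) := by
  apply Complex.ofReal_injective
  have hexp : ∀ t : ℝ, (ssumIntegrand g t : ℂ)
      = (∑ p ∈ range (3 * g - 4 + 1) ×ˢ range (g + 1),
          ((3 * g - 4).choose p.1 * g.choose p.2 : ℂ)
            * Complex.exp ((p.1 + 2 - 3 * p.2 : ℤ) * t * I)) / 2 ^ (4 * g - 4) := by
    intro t
    rw [show 4 * g - 4 = 3 * g - 4 + g by omega, ← cos_pow_mul_cos_pow_eq_sum _ _ _ (by omega)]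
    push_cast [ssumIntegrand]
    ring_nf
  rw [← intervalIntegral.integral_ofReal, intervalIntegral.integral_congr fun t _ => hexp t,
    intervalIntegral.integral_div, integral_sum_exp_int_mul_I, sum_choose_mul_choose_filter_eq_Ssum]
  push_cast
  ring

lemma tendsto_div_sqrt_natCast (c : ℝ) : Tendsto (fun n : ℕ => c / √n) atTop (𝓝 0) :=
  tendsto_const_nhds.div_atTop (tendsto_sqrt_atTop.comp tendsto_natCast_atTop_atTop)

lemma tendsto_natCast_mul_cos_div_sqrt_sub_one (c : ℝ) :
    Tendsto (fun n : ℕ => n * (cos (c / √n) - 1)) atTop (𝓝 (-(c ^ 2 / 2))) := by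
  have hsinc : Tendsto (fun n : ℕ => sinc (c / 2 / √n)) atTop (𝓝 1) := by
    simpa [Function.comp_def, sinc_zero] using
      (continuous_sinc.tendsto 0).comp (tendsto_div_sqrt_natCast (c / 2))
  have hlim : Tendsto (fun n : ℕ => -(c ^ 2 / 2) * sinc (c / 2 / √n) ^ 2) atTop
      (𝓝 (-(c ^ 2 / 2))) := by
    simpa using (hsinc.pow 2).const_mul (-(c ^ 2 / 2))
  refine hlim.congr' ?_
  filter_upwards [eventually_gt_atTop 0] with n hn
  have hn' : (0 : ℝ) < n := Nat.cast_pos.mpr hn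
  -- `1 - cos (2y) = 2 sin² y = 2 y² sinc² y` with `y = c / (2√n)`
  have hsin : sin (c / 2 / √n) = c / 2 / √n * sinc (c / 2 / √n) := by
    rcases eq_or_ne (c / 2 / √n) 0 with h | h
    · simp [h]
    · rw [sinc_of_ne_zero h, mul_div_cancel₀ _ h]
  rw [show c / √n = 2 * (c / 2 / √n) by ring, cos_two_mul, cos_sq', hsin, mul_pow, div_pow,
    sq_sqrt hn'.le]
  field_simp
  ring

lemma tendsto_cos_div_sqrt_pow {a : ℕ → ℕ} {A : ℝ}
    (ha : Tendsto (fun n : ℕ => (a n : ℝ) / n) atTop (𝓝 A)) (c : ℝ) :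
    Tendsto (fun n : ℕ => cos (c / √n) ^ a n) atTop (𝓝 (exp (-(A * c ^ 2 / 2)))) := by
  have hlog := Real.tendsto_nat_mul_log_one_add_of_tendsto
    (tendsto_natCast_mul_cos_div_sqrt_sub_one c)
  have hcos_pos : ∀ᶠ n : ℕ in atTop, 0 < cos (c / √n) := by
    have := (continuous_cos.tendsto 0).comp (tendsto_div_sqrt_natCast c)
    rw [Function.comp_def, cos_zero] at this
    exact this.eventually (eventually_gt_nhds one_pos)
  rw [show -(A * c ^ 2 / 2) = A * -(c ^ 2 / 2) by ring]
  refine ((continuous_exp.tendsto _).comp (ha.mul hlog)).congr' ?_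
  filter_upwards [hcos_pos, eventually_gt_atTop 0] with n hpos hn
  have hn' : (n : ℝ) ≠ 0 := Nat.cast_ne_zero.mpr hn.ne'
  rw [Function.comp_apply, add_sub_cancel, ← mul_assoc, div_mul_cancel₀ _ hn', exp_nat_mul,
    exp_log hpos]

lemma tendsto_natCast_mul_sub_div {k : ℕ} (hk : 0 < k) (m : ℕ) :
    Tendsto (fun n : ℕ => ((k * n - m : ℕ) : ℝ) / n) atTop (𝓝 k) := by
  have h : Tendsto (fun n : ℕ => (k : ℝ) - m / n) atTop (𝓝 k) := by
    simpa using tendsto_const_nhds.sub (tendsto_const_div_atTop_nhds_zero_nat (m : ℝ))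
  refine h.congr' ?_
  filter_upwards [eventually_ge_atTop (m + 1)] with n hn
  have hn' : (n : ℝ) ≠ 0 := by norm_cast; omega
  rw [Nat.cast_sub (by nlinarith), Nat.cast_mul]
  field_simp

lemma cos_half_le_exp {x : ℝ} (hx : |x| ≤ π) :
    cos (x / 2) ≤ exp (-(x ^ 2 / (2 * π ^ 2))) := by
  have hx2 : |x / 2| ≤ π := by rw [abs_div, abs_two]; linarith [pi_pos]
  calc cos (x / 2) ≤ 1 - 2 / π ^ 2 * (x / 2) ^ 2 := cos_le_one_sub_mul_cos_sq hx2
    _ = -(x ^ 2 / (2 * π ^ 2)) + 1 := by field_simp; ring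
    _ ≤ exp (-(x ^ 2 / (2 * π ^ 2))) := add_one_le_exp _

lemma abs_ssumIntegrand_le {g : ℕ} (hg : 2 ≤ g) {t : ℝ} (ht : |t| ≤ π) :
    |ssumIntegrand g t| ≤ exp (-(g * t ^ 2 / (2 * π ^ 2))) := by
  have hcos : 0 ≤ cos (t / 2) := by
    obtain ⟨h1, h2⟩ := abs_le.mp ht
    exact cos_nonneg_of_mem_Icc ⟨by linarith, by linarith⟩
  rw [ssumIntegrand, abs_mul, abs_pow, abs_pow, abs_of_nonneg hcos]
  calc cos (t / 2) ^ (3 * g - 4) * |cos (3 * t / 2)| ^ g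
      ≤ cos (t / 2) ^ g * 1 :=
        mul_le_mul (pow_le_pow_of_le_one hcos (cos_le_one _) (by omega))
          (pow_le_one₀ (abs_nonneg _) (abs_cos_le_one _)) (by positivity) (by positivity)
    _ ≤ exp (-(t ^ 2 / (2 * π ^ 2))) ^ g := by rw [mul_one]; gcongr; exact cos_half_le_exp ht
    _ = exp (-(g * t ^ 2 / (2 * π ^ 2))) := by rw [← exp_nat_mul]; ring_nf

lemma sqrt_mul_integral_ssumIntegrand (g : ℕ) :
    √g * ∫ t in -π..π, ssumIntegrand g t
      = ∫ u, (Set.Ioc (-π) π).indicator (ssumIntegrand g) (u / √g) := by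
  rw [Measure.integral_comp_div, abs_of_nonneg (sqrt_nonneg _), smul_eq_mul,
    integral_indicator measurableSet_Ioc, intervalIntegral.integral_of_le (by linarith [pi_pos])]

lemma tendsto_ssumIntegrand_div_sqrt (u : ℝ) :
    Tendsto (fun g : ℕ => (Set.Ioc (-π) π).indicator (ssumIntegrand g) (u / √g)) atTop
      (𝓝 (exp (-(3 / 2) * u ^ 2))) := by
  have h1 := tendsto_cos_div_sqrt_pow (tendsto_natCast_mul_sub_div three_pos 4) (u / 2)
  have h2 := tendsto_cos_div_sqrt_pow (tendsto_natCast_mul_sub_div one_pos 0) (3 * u / 2)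
  have hmem : ∀ᶠ g : ℕ in atTop, u / √g ∈ Set.Ioc (-π) π :=
    (tendsto_div_sqrt_natCast u).eventually
      (mem_of_superset (Ioo_mem_nhds (neg_neg_of_pos pi_pos) pi_pos) Set.Ioo_subset_Ioc_self)
  rw [show -(3 / 2) * u ^ 2 = -((3 : ℕ) * (u / 2) ^ 2 / 2) + -((1 : ℕ) * (3 * u / 2) ^ 2 / 2) by
    push_cast; ring, exp_add]
  refine (h1.mul h2).congr' ?_
  filter_upwards [hmem] with g hg
  rw [Set.indicator_of_mem hg, ssumIntegrand, one_mul, Nat.sub_zero]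
  ring_nf

lemma tendsto_sqrt_mul_integral_ssumIntegrand :
    Tendsto (fun g : ℕ => √g * ∫ t in -π..π, ssumIntegrand g t) atTop
      (𝓝 √(2 * π / 3)) := by
  simp_rw [sqrt_mul_integral_ssumIntegrand]
  rw [show 2 * π / 3 = π / (3 / 2) by ring, ← integral_gaussian]
  refine tendsto_integral_filter_of_dominated_convergence
    (fun u => exp (-(1 / (2 * π ^ 2)) * u ^ 2)) ?_ ?_
    (integrable_exp_neg_mul_sq (by positivity)) (ae_of_all _ tendsto_ssumIntegrand_div_sqrt)
  · refine Eventually.of_forall fun g => ?_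
    exact ((by unfold ssumIntegrand; fun_prop : Continuous (ssumIntegrand g)).measurable.indicator
      measurableSet_Ioc).comp_aemeasurable (by fun_prop) |>.aestronglyMeasurable
  · filter_upwards [eventually_ge_atTop 2] with g hg
    refine ae_of_all _ fun u => ?_
    rw [norm_eq_abs, Set.indicator_apply]
    split_ifs with hu
    · have hg' : (0 : ℝ) < g := by positivity
      calc |ssumIntegrand g (u / √g)| ≤ exp (-(g * (u / √g) ^ 2 / (2 * π ^ 2))) :=
            abs_ssumIntegrand_le hg (abs_le.mpr ⟨hu.1.le, hu.2⟩)
        _ = exp (-(1 / (2 * π ^ 2)) * u ^ 2) := by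
            rw [div_pow, sq_sqrt hg'.le]; field_simp
    · rw [abs_zero]; positivity

/-- `S(g) ~ 2^{4g−4}/√(6πg)` as `g → ∞`, i.e. `S(g)·√(6πg)/2^{4g−4}` tends to `1` as the
integer `g` tends to infinity. -/
theorem Ssum_asymptotics :
    Filter.Tendsto (fun g : ℕ => Ssum g * Real.sqrt (6 * Real.pi * g) / (2 : ℝ) ^ (4 * g - 4))
      atTop (nhds 1) := by
  have hconst : √(2 * π / 3) * (√(6 * π) / (2 * π)) = 1 := by
    rw [← mul_div_assoc, ← sqrt_mul (by positivity),
      show 2 * π / 3 * (6 * π) = (2 * π) ^ 2 by ring, sqrt_sq (by positivity),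
      div_self (by positivity)]
  refine hconst ▸ (tendsto_sqrt_mul_integral_ssumIntegrand.mul_const _).congr' ?_
  filter_upwards [eventually_ge_atTop 2] with g hg
  rw [integral_ssumIntegrand hg, sqrt_mul (by positivity : (0 : ℝ) ≤ 6 * π)]
  field_simp
end

section
/- The partial sums ∑_{k=1}^{m} ζ(2k)/k satisfy ∑_{k=1}^{m} ζ(2k)/k = log(2m) + γ + O(1/m) as m → ∞; precisely, the quantity m·( ∑_{k=1}^{m} ζ(2k)/k − log(2m) − γ ) remains bounded as the positive integer m tends to infinity. -/
/-!
Write `ζ(2k) = 1 + ∑_{n ≥ 2} (n⁻²)^k`. Summing `ζ(2k)/k` over `k ≤ m` gives the harmonic number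
`H_m` plus, for each `n ≥ 2`, the `m`-th partial sum of the series `-log (1 - n⁻²) = ∑_k (n⁻²)^k/k`.
These series add up to `log 2`, since `∏_{n ≥ 2} (1 - n⁻²) = 1/2` telescopes, and because
`n⁻² ≤ 1/4` their truncation errors sum to `O(4⁻ᵐ)`. Finally `H_m - log m - γ ∈ (0, 1/m]`.
-/

open Filter

/-- The Riemann zeta value `ζ(s) = ∑_{n ≥ 1} n^{−s}` for a natural exponent `s`. -/
noncomputable def zetaSum (s : ℕ) : ℝ := ∑' n : ℕ, 1 / ((n : ℝ) + 1) ^ s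

open Topology Real

theorem hasSum_sub_succ_of_antitone {f : ℕ → ℝ} {l : ℝ} (hf : Antitone f)
    (h : Tendsto f atTop (𝓝 l)) : HasSum (fun n ↦ f n - f (n + 1)) (f 0 - l) := by
  rw [hasSum_iff_tendsto_nat_of_nonneg (fun n ↦ sub_nonneg.2 (hf n.le_succ))]
  simp_rw [Finset.sum_range_sub']
  exact tendsto_const_nhds.sub h

theorem neg_log_one_sub_inv_sq {x : ℝ} (hx : 1 < x) :
    -log (1 - (x ^ 2)⁻¹) = (log x - log (x - 1)) - (log (x + 1) - log x) := by
  have hx1 : x - 1 ≠ 0 := by linarith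
  have hx2 : x + 1 ≠ 0 := by linarith
  have : 1 - (x ^ 2)⁻¹ = (x - 1) * (x + 1) / x ^ 2 := by field_simp; ring
  rw [this, log_div (by positivity) (by positivity), log_mul hx1 hx2, log_pow]
  push_cast
  ring

theorem neg_log_one_sub_inv_sq_nonneg {x : ℝ} (hx : 1 < x) : 0 ≤ -log (1 - (x ^ 2)⁻¹) := by
  have : 0 < (x ^ 2)⁻¹ := by positivity
  have : (x ^ 2)⁻¹ < 1 := inv_lt_one_of_one_lt₀ (one_lt_pow₀ hx two_ne_zero)
  exact neg_nonneg.2 (log_nonpos (by linarith) (by linarith))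

theorem hasSum_neg_log_one_sub_inv_add_two_sq :
    HasSum (fun n : ℕ ↦ -log (1 - (((n : ℝ) + 2) ^ 2)⁻¹)) (log 2) := by
  set g : ℕ → ℝ := fun n ↦ log ((n : ℝ) + 2) - log ((n : ℝ) + 1)
  have hx (n : ℕ) : 1 < (n : ℝ) + 2 := by linarith [n.cast_nonneg (α := ℝ)]
  have hstep (n : ℕ) : -log (1 - (((n : ℝ) + 2) ^ 2)⁻¹) = g n - g (n + 1) := by
    rw [neg_log_one_sub_inv_sq (hx n)]
    simp only [g]
    push_cast
    ring_nf
  have hg : Tendsto g atTop (𝓝 0) := by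
    have h := (tendsto_add_atTop_iff_nat 1).2 tendsto_log_nat_add_one_sub_log
    convert h using 2 with n
    simp only [g]
    push_cast
    ring_nf
  have hanti : Antitone g := antitone_nat_of_succ_le fun n ↦ by
    linarith [hstep n, neg_log_one_sub_inv_sq_nonneg (hx n)]
  simpa [hstep, g] using hasSum_sub_succ_of_antitone hanti hg

theorem summable_inv_add_two_sq : Summable fun n : ℕ ↦ (((n : ℝ) + 2) ^ 2)⁻¹ := by
  have h := (summable_nat_add_iff 2).2 (summable_nat_pow_inv.2 one_lt_two)
  exact_mod_cast h

theorem inv_add_two_sq_le (n : ℕ) : (((n : ℝ) + 2) ^ 2)⁻¹ ≤ 1 / 4 := by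
  rw [one_div]
  gcongr
  nlinarith [n.cast_nonneg (α := ℝ)]

theorem zetaSum_two_mul {k : ℕ} (hk : k ≠ 0) :
    zetaSum (2 * k) = 1 + ∑' n : ℕ, ((((n : ℝ) + 2) ^ 2)⁻¹) ^ k := by
  have hpow (n : ℕ) : 1 / ((n : ℝ) + 1) ^ (2 * k) = ((((n : ℝ) + 1) ^ 2)⁻¹) ^ k := by
    rw [one_div, pow_mul, inv_pow]
  have hsum : Summable fun n : ℕ ↦ 1 / ((n : ℝ) + 1) ^ (2 * k) := by
    have h := (summable_nat_add_iff 1).2 (summable_one_div_nat_pow.2 (by omega : 1 < 2 * k))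
    exact_mod_cast h
  rw [zetaSum, hsum.tsum_eq_zero_add]
  simp only [hpow]
  push_cast
  norm_num [add_assoc, one_add_one_eq_two, hk]

theorem sum_Icc_zetaSum_two_mul_div (m : ℕ) :
    ∑ k ∈ Finset.Icc 1 m, zetaSum (2 * k) / (k : ℝ) =
      harmonic m + ∑' n : ℕ, ∑ i ∈ Finset.range m,
        ((((n : ℝ) + 2) ^ 2)⁻¹) ^ (i + 1) / ((i : ℝ) + 1) := by
  have hsummable (i : ℕ) :
      Summable fun n : ℕ ↦ ((((n : ℝ) + 2) ^ 2)⁻¹) ^ (i + 1) / ((i : ℝ) + 1) := by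
    refine summable_inv_add_two_sq.of_nonneg_of_le (fun n ↦ by positivity) fun n ↦ ?_
    have h0 : 0 ≤ (((n : ℝ) + 2) ^ 2)⁻¹ := by positivity
    have h1 := (inv_add_two_sq_le n).trans (by norm_num : (1 : ℝ) / 4 ≤ 1)
    calc _ ≤ ((((n : ℝ) + 2) ^ 2)⁻¹) ^ (i + 1) :=
          div_le_self (by positivity) (by linarith [i.cast_nonneg (α := ℝ)])
      _ ≤ _ := pow_le_of_le_one h0 h1 i.succ_ne_zero
  have hterm (i : ℕ) : zetaSum (2 * (i + 1)) / ((i + 1 : ℕ) : ℝ) = ((i : ℝ) + 1)⁻¹ +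
      ∑' n : ℕ, ((((n : ℝ) + 2) ^ 2)⁻¹) ^ (i + 1) / ((i : ℝ) + 1) := by
    rw [zetaSum_two_mul i.succ_ne_zero, tsum_div_const, Nat.cast_succ, add_div, one_div]
  rw [← Finset.Ico_add_one_right_eq_Icc, ← Finset.sum_Ico_add' _ 0 m 1, ← Finset.range_eq_Ico]
  simp only [hterm, Finset.sum_add_distrib, Summable.tsum_finsetSum fun i _ ↦ hsummable i]
  simp [harmonic]

theorem abs_sum_range_pow_div_add_log_one_sub_le {x r : ℝ} (hx : 0 ≤ x) (hxr : x ≤ r)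
    (hr : r < 1) (m : ℕ) :
    |∑ i ∈ Finset.range m, x ^ (i + 1) / ((i : ℝ) + 1) + log (1 - x)| ≤ r ^ m / (1 - r) * x := by
  have hx1 : |x| < 1 := by rw [abs_of_nonneg hx]; linarith
  refine (abs_log_sub_add_sum_range_le hx1 m).trans ?_
  rw [abs_of_nonneg hx, pow_succ, div_mul_eq_mul_div]
  have : 0 ≤ r := hx.trans hxr
  gcongr

theorem abs_sum_Icc_zetaSum_two_mul_div_sub_harmonic_sub_log_two_le (m : ℕ) :
    |∑ k ∈ Finset.Icc 1 m, zetaSum (2 * k) / (k : ℝ) - harmonic m - log 2| ≤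
      4 / 3 * (1 / 4) ^ m * ∑' n : ℕ, (((n : ℝ) + 2) ^ 2)⁻¹ := by
  set x : ℕ → ℝ := fun n ↦ (((n : ℝ) + 2) ^ 2)⁻¹
  set e : ℕ → ℝ := fun n ↦
    ∑ i ∈ Finset.range m, x n ^ (i + 1) / ((i : ℝ) + 1) + log (1 - x n)
  have hbound (n : ℕ) : ‖e n‖ ≤ 4 / 3 * (1 / 4) ^ m * x n := by
    have h := abs_sum_range_pow_div_add_log_one_sub_le (by positivity) (inv_add_two_sq_le n)
      (by norm_num) m
    exact (norm_eq_abs _).trans_le (h.trans_eq (by ring))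
  have he : HasSum e (∑' n, e n) :=
    (summable_inv_add_two_sq.mul_left _ |>.of_norm_bounded hbound).hasSum
  have hsplit : ∑' n : ℕ, ∑ i ∈ Finset.range m, x n ^ (i + 1) / ((i : ℝ) + 1) =
      ∑' n, e n + log 2 := by
    refine (he.add hasSum_neg_log_one_sub_inv_add_two_sq).tsum_eq.symm ▸ tsum_congr fun n ↦ ?_
    simp only [e]
    ring
  rw [sum_Icc_zetaSum_two_mul_div, hsplit, add_sub_cancel_left, add_sub_cancel_right, ← norm_eq_abs]
  exact tsum_of_norm_bounded (summable_inv_add_two_sq.hasSum.mul_left _) hbound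

theorem log_add_one_sub_log_le_inv {x : ℝ} (hx : 0 < x) : log (x + 1) - log x ≤ x⁻¹ := by
  rw [← log_div (by positivity) hx.ne']
  calc log ((x + 1) / x) ≤ (x + 1) / x - 1 := log_le_sub_one_of_pos (by positivity)
    _ = x⁻¹ := by field_simp; ring

theorem harmonic_sub_log_sub_eulerMascheroniConstant_mem_Ioc {n : ℕ} (hn : n ≠ 0) :
    harmonic n - log n - eulerMascheroniConstant ∈ Set.Ioc 0 (n : ℝ)⁻¹ := by
  have hlower := eulerMascheroniConstant_lt_eulerMascheroniSeq' n
  have hupper := eulerMascheroniSeq_lt_eulerMascheroniConstant n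
  rw [eulerMascheroniSeq', if_neg hn] at hlower
  rw [eulerMascheroniSeq] at hupper
  have := log_add_one_sub_log_le_inv (Nat.cast_pos.2 (Nat.pos_of_ne_zero hn))
  constructor <;> linarith

theorem natCast_mul_one_div_four_pow_le_one (m : ℕ) : (m : ℝ) * (1 / 4) ^ m ≤ 1 := by
  have : (m : ℝ) ≤ 4 ^ m := by exact_mod_cast (Nat.lt_pow_self (by norm_num : 1 < 4)).le
  rw [one_div_pow, mul_one_div, div_le_one (by positivity)]
  exact this

/-- `∑_{k=1}^{m} ζ(2k)/k = log(2m) + γ + O(1/m)` as `m → ∞`; precisely, the quantity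
`m·(∑_{k=1}^{m} ζ(2k)/k − log(2m) − γ)` remains bounded as the positive integer `m` tends
to infinity. -/
theorem zeta_harmonic_sum_asymptotics :
    ∃ C : ℝ, ∀ᶠ m : ℕ in atTop,
      |(m : ℝ) * ((∑ k ∈ Finset.Icc 1 m, zetaSum (2 * k) / (k : ℝ)) -
        Real.log (2 * m) - Real.eulerMascheroniConstant)| ≤ C := by
  refine ⟨1 + 4 / 3 * ∑' n : ℕ, (((n : ℝ) + 2) ^ 2)⁻¹, ?_⟩
  filter_upwards [eventually_ne_atTop 0] with m hm
  have hm0 : (0 : ℝ) < m := Nat.cast_pos.2 (Nat.pos_of_ne_zero hm)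
  obtain ⟨hγ0, hγ1⟩ := harmonic_sub_log_sub_eulerMascheroniConstant_mem_Ioc hm
  have htail := abs_sum_Icc_zetaSum_two_mul_div_sub_harmonic_sub_log_two_le m
  set S := ∑' n : ℕ, (((n : ℝ) + 2) ^ 2)⁻¹
  set Z := ∑ k ∈ Finset.Icc 1 m, zetaSum (2 * k) / (k : ℝ)
  have hS : 0 ≤ S := tsum_nonneg fun n ↦ by positivity
  have hsplit : Z - log (2 * m) - eulerMascheroniConstant =
      (harmonic m - log m - eulerMascheroniConstant) + (Z - harmonic m - log 2) := by
    rw [log_mul two_ne_zero hm0.ne']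
    ring
  calc |(m : ℝ) * (Z - log (2 * m) - eulerMascheroniConstant)|
      ≤ m * ((m : ℝ)⁻¹ + 4 / 3 * (1 / 4) ^ m * S) := by
        rw [abs_mul, abs_of_pos hm0, hsplit]
        gcongr
        exact (abs_add_le _ _).trans (add_le_add ((abs_of_pos hγ0).trans_le hγ1) htail)
    _ = 1 + 4 / 3 * S * (m * (1 / 4) ^ m) := by field_simp
    _ ≤ 1 + 4 / 3 * S := by
      grw [natCast_mul_one_div_four_pow_le_one m, mul_one]
end

section
/- For every real number x with |x| < 2 the series ∑_{j=0}^{∞} A_j·x^j and ∑_{j=0}^{∞} B_j·x^j converge, and ∑_{j=0}^{∞} A_j·x^j = 1/Γ(1+x) while ∑_{j=0}^{∞} B_j·x^j = 2^x/Γ(1+x), where Γ is the Gamma function. -/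
/-!
Expanding `u ^ z = exp (z log u)` in Euler's integral gives `Γ(1 + z) = ∑ c_j z ^ j` for
`|z| < 1`. The recursions say that `∑ A_j z ^ j` and `∑ B_j z ^ j`, multiplied by this series,
give the Taylor series at `0` of `1` and of `2 ^ z = exp (z log 2)`. By the Leibniz rule the
Taylor series of the entire functions `1 / Γ(1 + z)` and `2 ^ z / Γ(1 + z)` satisfy the same
identities, and `∑ c_j z ^ j` can be cancelled since `c_0 = 1`. Hence `A_j` and `B_j` are the
Taylor coefficients of these entire functions, whose Taylor series converge on all of `ℂ`.
-/

/-- `c_j = (1/j!)·∫_0^∞ e^{−u}(log u)^j du`, the `j`-th Taylor coefficient of the Gamma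
function at `1`. -/
noncomputable def cGamma (j : ℕ) : ℝ :=
  (1 / (Nat.factorial j : ℝ)) * ∫ u in Set.Ioi (0 : ℝ), Real.exp (-u) * (Real.log u) ^ j

open Finset Filter Topology PowerSeries
open scoped Nat

theorem PowerSeries.coeff_mk_mul_mk {R : Type*} [CommSemiring R] (a b : ℕ → R) (n : ℕ) :
    coeff n (mk a * mk b) = ∑ i ∈ range (n + 1), a (n - i) * b i := by
  rw [mul_comm, coeff_mul,
    Nat.sum_antidiagonal_eq_sum_range_succ fun i j => coeff i (mk b) * coeff j (mk a)]
  simp only [coeff_mk, mul_comm]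

section Taylor

variable {𝕜 : Type*} [NontriviallyNormedField 𝕜]

noncomputable def taylorPowerSeries (f : 𝕜 → 𝕜) (x : 𝕜) : PowerSeries 𝕜 :=
  mk fun n => iteratedDeriv n f x / n !

theorem Filter.EventuallyEq.taylorPowerSeries_eq {f g : 𝕜 → 𝕜} {x : 𝕜} (h : f =ᶠ[𝓝 x] g) :
    taylorPowerSeries f x = taylorPowerSeries g x := by
  ext n
  simp only [taylorPowerSeries, coeff_mk, h.iteratedDeriv_eq]

theorem taylorPowerSeries_mul [CharZero 𝕜] {f g : 𝕜 → 𝕜} {x : 𝕜} (hf : ContDiffAt 𝕜 ⊤ f x)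
    (hg : ContDiffAt 𝕜 ⊤ g x) :
    taylorPowerSeries (f * g) x = taylorPowerSeries f x * taylorPowerSeries g x := by
  ext n
  simp only [taylorPowerSeries, coeff_mk, iteratedDeriv_mul (hf.of_le le_top) (hg.of_le le_top),
    Finset.sum_div, coeff_mul, Finset.Nat.sum_antidiagonal_eq_sum_range_succ_mk]
  refine Finset.sum_congr rfl fun i hi => ?_
  rw [Nat.cast_choose 𝕜 (Finset.mem_range_succ_iff.mp hi)]
  have := Nat.cast_ne_zero (R := 𝕜) |>.mpr n.factorial_ne_zero
  field_simp

theorem HasFPowerSeriesAt.taylorPowerSeries_eq [CompleteSpace 𝕜] [CharZero 𝕜] {f : 𝕜 → 𝕜}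
    {c : ℕ → 𝕜} {x : 𝕜} (h : HasFPowerSeriesAt f (FormalMultilinearSeries.ofScalars 𝕜 c) x) :
    taylorPowerSeries f x = mk c :=
  congrArg mk <| FormalMultilinearSeries.ofScalars_series_injective 𝕜 𝕜
    (h.analyticAt.hasFPowerSeriesAt.eq_formalMultilinearSeries h)

end Taylor

theorem Complex.hasSum_taylorPowerSeries {f : ℂ → ℂ} (hf : Differentiable ℂ f) (z : ℂ) :
    HasSum (fun n => coeff n (taylorPowerSeries f 0) * z ^ n) (f z) := by
  simpa [taylorPowerSeries, div_eq_inv_mul, mul_assoc, mul_comm, mul_left_comm]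
    using Complex.hasSum_taylorSeries_of_entire hf 0 z

section GammaSeries

open Real MeasureTheory Set

theorem cGamma_zero : cGamma 0 = 1 := by
  simp [cGamma, integral_exp_Iic_zero]

theorem exp_mul_abs_log_le (r : ℝ) {u : ℝ} (hu : 0 < u) :
    rexp (r * |log u|) ≤ u ^ r + u ^ (-r) := by
  have h₁ := rpow_nonneg hu.le r
  have h₂ := rpow_nonneg hu.le (-r)
  rcases le_total 1 u with h | h
  · rw [abs_of_nonneg (log_nonneg h), mul_comm, ← rpow_def_of_pos hu]
    linarith
  · rw [abs_of_nonpos (log_nonpos hu.le h), mul_neg, ← neg_mul, mul_comm, ← rpow_def_of_pos hu]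
    linarith

theorem integrableOn_exp_neg_mul_exp_mul_abs_log {r : ℝ} (hr : |r| < 1) :
    IntegrableOn (fun u => rexp (-u) * rexp (r * |log u|)) (Ioi 0) := by
  have hpos : IntegrableOn (fun u => rexp (-u) * u ^ r) (Ioi 0) := by
    simpa using GammaIntegral_convergent (s := r + 1) (by linarith [neg_abs_le r])
  have hneg : IntegrableOn (fun u => rexp (-u) * u ^ (-r)) (Ioi 0) := by
    simpa [sub_sub_cancel_left] using
      GammaIntegral_convergent (s := 1 - r) (by linarith [le_abs_self r])
  refine (hpos.add hneg).mono' (by fun_prop) ?_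
  filter_upwards [ae_restrict_mem measurableSet_Ioi] with u hu
  rw [Pi.add_apply, norm_of_nonneg (by positivity), ← mul_add]
  exact mul_le_mul_of_nonneg_left (exp_mul_abs_log_le r hu) (exp_pos _).le

noncomputable def gammaSeriesTerm (z : ℂ) (j : ℕ) (u : ℝ) : ℂ :=
  z ^ j / j ! * (rexp (-u) * log u ^ j : ℝ)

theorem hasSum_gammaSeriesTerm (z : ℂ) {u : ℝ} (hu : 0 < u) :
    HasSum (fun j => gammaSeriesTerm z j u) (rexp (-u) * (u : ℂ) ^ z) := by
  have hexp := NormedSpace.expSeries_div_hasSum_exp (z * log u)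
  rw [← Complex.exp_eq_exp_ℂ] at hexp
  rw [Complex.cpow_def_of_ne_zero (by exact_mod_cast hu.ne'), ← Complex.ofReal_log hu.le,
    mul_comm _ z]
  refine (hexp.mul_left _).congr_fun fun j => ?_
  simp only [gammaSeriesTerm]
  push_cast
  ring

theorem norm_gammaSeriesTerm_le (z : ℂ) (j : ℕ) (u : ℝ) {r : ℝ} (hr : 0 < r) :
    ‖gammaSeriesTerm z j u‖ ≤ (‖z‖ / r) ^ j * (rexp (-u) * rexp (r * |log u|)) := by
  have hexp : (r * |log u|) ^ j / j ! ≤ rexp (r * |log u|) :=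
    pow_div_factorial_le_exp _ (by positivity) j
  calc ‖gammaSeriesTerm z j u‖ = (‖z‖ / r) ^ j * (rexp (-u) * ((r * |log u|) ^ j / j !)) := by
        simp only [gammaSeriesTerm, norm_mul, norm_div, norm_pow, Complex.norm_natCast,
          Complex.norm_real, norm_eq_abs, abs_of_pos (exp_pos _)]
        rw [div_pow, mul_pow]
        field_simp
    _ ≤ _ := by gcongr

theorem integral_gammaSeriesTerm (z : ℂ) (j : ℕ) :
    ∫ u in Ioi 0, gammaSeriesTerm z j u = cGamma j * z ^ j := by
  simp only [gammaSeriesTerm]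
  rw [integral_const_mul, integral_complex_ofReal, cGamma]
  push_cast
  ring

theorem hasSum_cGamma_mul_pow {z : ℂ} (hz : ‖z‖ < 1) :
    HasSum (fun j => (cGamma j : ℂ) * z ^ j) (Complex.Gamma (1 + z)) := by
  obtain ⟨r, hzr, hr1⟩ := exists_between hz
  have hr0 : 0 < r := (norm_nonneg z).trans_lt hzr
  have hG := integrableOn_exp_neg_mul_exp_mul_abs_log (r := r) (by rwa [abs_of_pos hr0])
  have hint : ∀ j, IntegrableOn (gammaSeriesTerm z j) (Ioi 0) := fun j =>
    (hG.const_mul _).mono' (by unfold gammaSeriesTerm; fun_prop)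
      (ae_of_all _ fun u => norm_gammaSeriesTerm_le z j u hr0)
  have hsum : Summable fun j => ∫ u in Ioi 0, ‖gammaSeriesTerm z j u‖ := by
    refine .of_nonneg_of_le (fun j => integral_nonneg fun u => norm_nonneg _) (fun j => ?_)
      ((summable_geometric_of_lt_one (by positivity) ((div_lt_one hr0).2 hzr)).mul_right
        (∫ u in Ioi 0, rexp (-u) * rexp (r * |log u|)))
    rw [← integral_const_mul]
    exact integral_mono_of_nonneg (ae_of_all _ fun u => norm_nonneg _) (hG.const_mul _)
      (ae_of_all _ fun u => norm_gammaSeriesTerm_le z j u hr0)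
  have hre : 0 < (1 + z).re := by
    simp only [Complex.add_re, Complex.one_re]
    linarith [neg_abs_le z.re, Complex.abs_re_le_norm z]
  have hGamma : ∫ u in Ioi 0, ∑' j, gammaSeriesTerm z j u = Complex.Gamma (1 + z) := by
    rw [Complex.Gamma_eq_integral hre, Complex.GammaIntegral, add_sub_cancel_left]
    exact setIntegral_congr_fun measurableSet_Ioi fun u hu =>
      (hasSum_gammaSeriesTerm z hu).tsum_eq
  simpa only [hGamma, integral_gammaSeriesTerm] using
    hasSum_integral_of_summable_integral_norm hint hsum

theorem hasFPowerSeriesOnBall_Gamma_one_add :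
    HasFPowerSeriesOnBall (fun z => Complex.Gamma (1 + z))
      (FormalMultilinearSeries.ofScalars ℂ fun j => (cGamma j : ℂ)) 0 1 where
  r_le := ENNReal.le_of_forall_nnreal_lt fun r hr => by
    refine FormalMultilinearSeries.le_radius_of_tendsto _ (l := 0) ?_
    have hr' : ‖(r : ℂ)‖ < 1 := by simpa using hr
    simpa [FormalMultilinearSeries.ofScalars_norm] using
      (hasSum_cGamma_mul_pow hr').summable.tendsto_atTop_zero.norm
  r_pos := zero_lt_one
  hasSum {y} hy := by
    rw [Metric.mem_eball, edist_zero_right] at hy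
    simpa [FormalMultilinearSeries.ofScalars_apply_eq, mul_comm] using
      hasSum_cGamma_mul_pow (by exact_mod_cast (enorm_lt_coe (r := 1)).mp hy)

end GammaSeries

theorem taylorPowerSeries_Gamma_one_add :
    taylorPowerSeries (fun z => Complex.Gamma (1 + z)) 0 = mk fun j => (cGamma j : ℂ) :=
  hasFPowerSeriesOnBall_Gamma_one_add.hasFPowerSeriesAt.taylorPowerSeries_eq

theorem hasSum_mul_pow_of_sum_mul_cGamma {E : ℂ → ℂ} (hE : Differentiable ℂ E) {A : ℕ → ℂ}
    (hA : ∀ n, ∑ i ∈ range (n + 1), A (n - i) * cGamma i = iteratedDeriv n E 0 / n !)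
    (z : ℂ) : HasSum (fun n => A n * z ^ n) (E z / Complex.Gamma (1 + z)) := by
  set f : ℂ → ℂ := fun z => E z / Complex.Gamma (1 + z)
  have hf : Differentiable ℂ f := hE.mul (Complex.differentiable_one_div_Gamma.comp
    ((differentiable_const 1).add differentiable_id))
  have hΓ : ContDiffAt ℂ ⊤ (fun z => Complex.Gamma (1 + z)) 0 :=
    hasFPowerSeriesOnBall_Gamma_one_add.analyticAt.contDiffAt
  have hfΓ : f * (fun z => Complex.Gamma (1 + z)) =ᶠ[𝓝 0] E := by
    have hΓ0 : Complex.Gamma (1 + 0) ≠ 0 := by simp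
    filter_upwards [hΓ.continuousAt.eventually_ne hΓ0] with z hz using div_mul_cancel₀ _ hz
  have hmk : mk A * mk (fun j => (cGamma j : ℂ)) =
      taylorPowerSeries f 0 * mk (fun j => (cGamma j : ℂ)) := calc
    _ = taylorPowerSeries E 0 := by
      ext n
      rw [coeff_mk_mul_mk, hA, taylorPowerSeries, coeff_mk]
    _ = taylorPowerSeries (f * fun z => Complex.Gamma (1 + z)) 0 := hfΓ.taylorPowerSeries_eq.symm
    _ = _ := by
      rw [taylorPowerSeries_mul hf.contDiff.contDiffAt hΓ, taylorPowerSeries_Gamma_one_add]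
  have hc : mk (fun j => (cGamma j : ℂ)) ≠ 0 := fun h => by
    simpa [cGamma_zero] using congrArg (coeff 0) h
  simpa [← mul_right_cancel₀ hc hmk, f] using Complex.hasSum_taylorPowerSeries hf z

theorem generating_functions_of_A_B_general (A B : ℕ → ℝ)
    (hA0 : A 0 = 1) (hB0 : B 0 = 1)
    (hA : ∀ j : ℕ, 1 ≤ j → ∑ i ∈ Finset.range (j + 1), A (j - i) * cGamma i = 0)
    (hB : ∀ j : ℕ, 1 ≤ j →
      ∑ i ∈ Finset.range (j + 1), B (j - i) * cGamma i =
        (Real.log 2) ^ j / (Nat.factorial j : ℝ))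
    (x : ℝ) :
    HasSum (fun j : ℕ => A j * x ^ j) (1 / Real.Gamma (1 + x)) ∧
    HasSum (fun j : ℕ => B j * x ^ j) ((2 : ℝ) ^ x / Real.Gamma (1 + x)) := by
  have hA' : ∀ n, ∑ i ∈ range (n + 1), (A (n - i) : ℂ) * cGamma i =
      iteratedDeriv n (fun _ : ℂ => (1 : ℂ)) 0 / n ! := by
    rintro (_ | n)
    · simp [hA0, cGamma_zero]
    · simpa [iteratedDeriv_const] using congrArg ((↑) : ℝ → ℂ) (hA (n + 1) n.succ_pos)
  have hB' : ∀ n, ∑ i ∈ range (n + 1), (B (n - i) : ℂ) * cGamma i =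
      iteratedDeriv n (fun z => Complex.exp (Real.log 2 * z)) 0 / n ! := by
    rintro (_ | n)
    · simp [hB0, cGamma_zero]
    · simpa using congrArg ((↑) : ℝ → ℂ) (hB (n + 1) n.succ_pos)
  have hE : Differentiable ℂ fun z => Complex.exp (Real.log 2 * z) := by fun_prop
  have hΓ : Complex.Gamma (1 + x) = Real.Gamma (1 + x) := by
    rw [← Complex.Gamma_ofReal, Complex.ofReal_add, Complex.ofReal_one]
  constructor
  · rw [← Complex.hasSum_ofReal]
    simpa [hΓ] using hasSum_mul_pow_of_sum_mul_cGamma (differentiable_const 1) hA' x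
  · rw [← Complex.hasSum_ofReal]
    simpa [hΓ, Real.rpow_def_of_pos two_pos, mul_comm] using
      hasSum_mul_pow_of_sum_mul_cGamma hE hB' x

/-- For the sequences `(A_j)`, `(B_j)` determined by `A₀ = B₀ = 1` and the recursions
`∑_{i=0}^{j} A_{j−i} c_i = 0`, `∑_{i=0}^{j} B_{j−i} c_i = (log 2)^j/j!` for `j ≥ 1`, and
for every real `x` with `|x| < 2`, the series `∑ A_j x^j` and `∑ B_j x^j` converge with
`∑_{j=0}^{∞} A_j x^j = 1/Γ(1+x)` and `∑_{j=0}^{∞} B_j x^j = 2^x/Γ(1+x)`. -/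
theorem generating_functions_of_A_B (A B : ℕ → ℝ)
    (hA0 : A 0 = 1) (hB0 : B 0 = 1)
    (hA : ∀ j : ℕ, 1 ≤ j → ∑ i ∈ Finset.range (j + 1), A (j - i) * cGamma i = 0)
    (hB : ∀ j : ℕ, 1 ≤ j →
      ∑ i ∈ Finset.range (j + 1), B (j - i) * cGamma i =
        (Real.log 2) ^ j / (Nat.factorial j : ℝ))
    (x : ℝ) (hx : |x| < 2) :
    HasSum (fun j : ℕ => A j * x ^ j) (1 / Real.Gamma (1 + x)) ∧
    HasSum (fun j : ℕ => B j * x ^ j) ((2 : ℝ) ^ x / Real.Gamma (1 + x)) :=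
  generating_functions_of_A_B_general A B hA0 hB0 hA hB x
end

section
/- For every real number t with 0 ≤ t < 1 the series ∑_{m=1}^{∞} (ζ(2m)/m)·t^m converges and equals log Γ(1−√t) + log Γ(1+√t), where Γ is the Gamma function (for t = 0 both sides equal 0). -/
open Real Filter Topology Finset

theorem hasSum_zetaSum {s : ℕ} (hs : 2 ≤ s) :
    HasSum (fun n : ℕ => 1 / ((n : ℝ) + 1) ^ s) (zetaSum s) := by
  have h : Summable (fun n : ℕ => 1 / (n : ℝ) ^ s) := summable_one_div_nat_pow.mpr (by omega)
  exact (((summable_nat_add_iff 1).mpr h).congr fun n => by push_cast; rfl).hasSum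

theorem hasSum_pow_div_pow_zetaSum (t : ℝ) {k m : ℕ} (h : 2 ≤ k * m) :
    HasSum (fun n : ℕ => (t / ((n : ℝ) + 1) ^ k) ^ m) (t ^ m * zetaSum (k * m)) := by
  refine ((hasSum_zetaSum h).mul_left (t ^ m)).congr_fun fun n => ?_
  rw [div_pow, pow_mul, div_eq_mul_one_div]

theorem HasSum.prod_fiberwise_swap_of_nonneg {β γ : Type*} {f : β × γ → ℝ} {g : β → ℝ}
    {h : γ → ℝ} {a : ℝ} (hf : 0 ≤ f) (ha : HasSum g a)
    (hg : ∀ b, HasSum (fun c => f (b, c)) (g b)) (hh : ∀ c, HasSum (fun b => f (b, c)) (h c)) :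
    HasSum h a := by
  have hsum : Summable f := (summable_prod_of_nonneg hf).mpr
    ⟨fun b => (hg b).summable, ha.summable.congr fun b => ((hg b).tsum_eq).symm⟩
  have hfa : HasSum f a := (hsum.hasSum.prod_fiberwise hg).unique ha ▸ hsum.hasSum
  exact ((Equiv.prodComm γ β).hasSum_iff.mpr hfa).prod_fiberwise hh

theorem Gamma_one_sub_mul_Gamma_one_add {x : ℝ} (hx : x ≠ 0) :
    Gamma (1 - x) * Gamma (1 + x) = π * x / sin (π * x) := by
  rw [add_comm, Gamma_add_one hx, mul_left_comm, mul_comm (Gamma (1 - x)), Gamma_mul_Gamma_one_sub,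
    mul_div_assoc', mul_comm x]

theorem tendsto_prod_one_sub_sq_div_sq (x : ℝ) :
    Tendsto (fun N : ℕ => ∏ j ∈ range N, (1 - x ^ 2 / ((j : ℝ) + 1) ^ 2)) atTop
      (𝓝 (Gamma (1 - x) * Gamma (1 + x))⁻¹) := by
  rcases eq_or_ne x 0 with rfl | hx
  · simp
  have hπx : π * x ≠ 0 := mul_ne_zero pi_ne_zero hx
  rw [Gamma_one_sub_mul_Gamma_one_add hx, inv_div]
  exact ((tendsto_euler_sin_prod x).div_const (π * x)).congr fun N => by field_simp

theorem sq_div_add_one_sq_lt_one {x : ℝ} (hx : |x| < 1) (n : ℕ) :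
    x ^ 2 / ((n : ℝ) + 1) ^ 2 < 1 := by
  rw [div_lt_one (by positivity)]
  calc x ^ 2 < 1 := (sq_lt_one_iff_abs_lt_one x).mpr hx
    _ ≤ ((n : ℝ) + 1) ^ 2 := one_le_pow₀ (le_add_of_nonneg_left n.cast_nonneg)

theorem hasSum_neg_log_one_sub_sq_div_sq {x : ℝ} (hx : |x| < 1) :
    HasSum (fun n : ℕ => -log (1 - x ^ 2 / ((n : ℝ) + 1) ^ 2))
      (log (Gamma (1 - x)) + log (Gamma (1 + x))) := by
  have hterm_pos (n : ℕ) : 0 < 1 - x ^ 2 / ((n : ℝ) + 1) ^ 2 :=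
    sub_pos.mpr (sq_div_add_one_sq_lt_one hx n)
  have hterm_le_one (n : ℕ) : 1 - x ^ 2 / ((n : ℝ) + 1) ^ 2 ≤ 1 :=
    sub_le_self _ (by positivity)
  obtain ⟨hx1, hx2⟩ := abs_lt.mp hx
  have hG₁ : 0 < Gamma (1 - x) := Gamma_pos_of_pos (by linarith)
  have hG₂ : 0 < Gamma (1 + x) := Gamma_pos_of_pos (by linarith)
  -- The terms are non-negative, so the convergence of the logarithms of Euler's partial
  -- products is all that is needed.
  rw [hasSum_iff_tendsto_nat_of_nonneg
      fun n => neg_nonneg.mpr (log_nonpos (hterm_pos n).le (hterm_le_one n)),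
    ← log_mul hG₁.ne' hG₂.ne', ← neg_neg (log _), ← log_inv]
  refine (((continuousAt_log (inv_pos.mpr (mul_pos hG₁ hG₂)).ne').tendsto.comp
    (tendsto_prod_one_sub_sq_div_sq x)).neg).congr fun N => ?_
  rw [Function.comp_apply, log_prod fun j _ => (hterm_pos j).ne', sum_neg_distrib]

/-- For every real `0 ≤ t < 1`, the series `∑_{m≥1} (ζ(2m)/m)·t^m` converges and equals
`log Γ(1−√t) + log Γ(1+√t)`. -/
theorem zeta_series_eq_log_Gamma (t : ℝ) (ht0 : 0 ≤ t) (ht1 : t < 1) :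
    HasSum (fun m : ℕ => zetaSum (2 * (m + 1)) / ((m : ℝ) + 1) * t ^ (m + 1))
      (Real.log (Real.Gamma (1 - Real.sqrt t)) + Real.log (Real.Gamma (1 + Real.sqrt t))) := by
  have hx : |√t| < 1 := by rw [abs_of_nonneg (sqrt_nonneg t), sqrt_lt' one_pos]; simpa
  have hrows := hasSum_neg_log_one_sub_sq_div_sq hx
  rw [sq_sqrt ht0] at hrows
  refine hrows.prod_fiberwise_swap_of_nonneg
    (f := fun p : ℕ × ℕ => (t / ((p.1 : ℝ) + 1) ^ 2) ^ (p.2 + 1) / ((p.2 : ℝ) + 1))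
    (fun p => by positivity) (fun n => hasSum_pow_div_log_of_abs_lt_one ?_) fun m => ?_
  · rw [abs_of_nonneg (by positivity), ← sq_sqrt ht0]
    exact sq_div_add_one_sq_lt_one hx n
  · have h := (hasSum_pow_div_pow_zetaSum t (k := 2) (m := m + 1) (by omega)).div_const
      ((m : ℝ) + 1)
    rwa [mul_comm (t ^ _), mul_div_right_comm] at h
end
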